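/- arXiv:2009.00131 — 8 statements merged into one kernel-verified Lean document; each statement's English description precedes it below -/
import Mathlib

section
/- In the IPC representation with pseudo marginals Q_v, pseudo classifiers β^(i)_v, pseudo weights φ^(i)_v = E_Q[β^(i)_v] > 0, and w̃_i = (∏_v φ^(i)_v)^{1/V}, the marginal of the v-th variate of the distribution P(X) = (∑_i w̃_i)^{-1} ∑_i w̃_i^{1−V} ∏_u Q_u(x_u) β^(i)_u(x_u) equals P_v(x_v) = Q_v(x_v) (∑_i w̃_i)^{-1} ∑_i β^(i)_v(x_v) w̃_i / φ^(i)_v. -/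
/-!
Each mixture component `w̃ᵢ^{1-V} ∏ᵤ Qᵤ β⁽ⁱ⁾ᵤ` is a product of one-variable functions, so by
Fubini its integral over the variates `u ≠ v` is `w̃ᵢ^{1-V} Q_v β⁽ⁱ⁾_v ∏_{u ≠ v} φ⁽ⁱ⁾ᵤ`.
Since `w̃ᵢ^V = ∏ᵤ φ⁽ⁱ⁾ᵤ`, the remaining product is `w̃ᵢ^V / φ⁽ⁱ⁾_v`, and the powers of `w̃ᵢ`
collapse to `w̃ᵢ / φ⁽ⁱ⁾_v`.
-/

open MeasureTheory BigOperators

/-- Insert the value `x` at coordinate `v` into a point `y` of the remaining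
coordinates, producing a full point of the product space. -/
def insertAt {V : ℕ} {X : Fin V → Type*} (v : Fin V) (x : X v)
    (y : ∀ u : {u : Fin V // u ≠ v}, X u.1) (u : Fin V) : X u :=
  if h : u = v then (congrArg X h).mpr x else y ⟨u, h⟩

section insertAt

variable {V : ℕ} {X : Fin V → Type*} (v : Fin V) (x : X v)
  (y : ∀ u : {u : Fin V // u ≠ v}, X u.1)

@[simp]
theorem insertAt_self : insertAt v x y v = x := by
  simp [insertAt]

@[simp]
theorem insertAt_of_ne (u : {u : Fin V // u ≠ v}) : insertAt v x y u.1 = y u := by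
  simp [insertAt, u.2]

theorem prod_insertAt {M : Type*} [CommMonoid M] (f : ∀ u, X u → M) :
    ∏ u, f u (insertAt v x y u) = f v x * ∏ u : {u : Fin V // u ≠ v}, f u.1 (y u) := by
  rw [Fintype.prod_eq_mul_prod_subtype_ne _ v]
  simp only [insertAt_self, insertAt_of_ne]

end insertAt

section Marginal

variable {𝕜 : Type*} [RCLike 𝕜] {V : ℕ} {X : Fin V → Type*} [∀ v, MeasurableSpace (X v)]
  (μ : ∀ v, Measure (X v)) [∀ v, SigmaFinite (μ v)] (v : Fin V) (x : X v)

theorem integrable_prod_insertAt {f : ∀ u, X u → 𝕜} (hf : ∀ u, Integrable (f u) (μ u)) :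
    Integrable (fun y => ∏ u, f u (insertAt v x y u))
      (Measure.pi fun u : {u : Fin V // u ≠ v} => μ u.1) := by
  simp_rw [prod_insertAt]
  exact (Integrable.fintype_prod_dep fun u : {u : Fin V // u ≠ v} => hf u.1).const_mul _

theorem integral_prod_insertAt (f : ∀ u, X u → 𝕜) :
    ∫ y, ∏ u, f u (insertAt v x y u) ∂(Measure.pi fun u : {u : Fin V // u ≠ v} => μ u.1)
      = f v x * ∏ u : {u : Fin V // u ≠ v}, ∫ z, f u.1 z ∂(μ u.1) := by
  simp_rw [prod_insertAt, integral_const_mul]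
  rw [integral_fintype_prod_eq_prod (fun u : {u : Fin V // u ≠ v} => f u.1)]

theorem integral_mixture_prod_insertAt {ι : Type*} [Fintype ι] (c : 𝕜) (a : ι → 𝕜)
    {f : ι → ∀ u, X u → 𝕜} (hf : ∀ i u, Integrable (f i u) (μ u)) :
    ∫ y, c * ∑ i, a i * ∏ u, f i u (insertAt v x y u)
        ∂(Measure.pi fun u : {u : Fin V // u ≠ v} => μ u.1)
      = c * ∑ i, a i * (f i v x * ∏ u : {u : Fin V // u ≠ v}, ∫ z, f i u.1 z ∂(μ u.1)) := by
  rw [integral_const_mul,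
    integral_finsetSum _ fun i _ => (integrable_prod_insertAt μ v x (hf i)).const_mul _]
  simp_rw [integral_const_mul, integral_prod_insertAt]

end Marginal

theorem zpow_one_sub_natCast_mul_pow {K : Type*} [GroupWithZero K] {t : K} (ht : t ≠ 0)
    (n : ℕ) : t ^ ((1 : ℤ) - n) * t ^ n = t := by
  rw [← zpow_natCast, ← zpow_add₀ ht, sub_add_cancel, zpow_one]

theorem zpow_one_sub_mul_prod_subtype_ne {K ι : Type*} [Field K] [Fintype ι] [DecidableEq ι]
    {t : K} (ht : t ≠ 0) {n : ℕ} {φ : ι → K} (h : t ^ n = ∏ u, φ u) {v : ι} (hv : φ v ≠ 0) :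
    t ^ ((1 : ℤ) - n) * ∏ u : {u // u ≠ v}, φ u = t / φ v := by
  have hprod : ∏ u : {u // u ≠ v}, φ u = t ^ n / φ v := by
    rw [h, Fintype.prod_eq_mul_prod_subtype_ne φ v, mul_div_cancel_left₀ _ hv]
  rw [hprod, mul_div_assoc', zpow_one_sub_natCast_mul_pow ht]

theorem statement_4_general {V C : ℕ} (hV : 0 < V) {X : Fin V → Type*}
    [∀ v, MeasurableSpace (X v)]
    (μ : ∀ v, Measure (X v)) [∀ v, SigmaFinite (μ v)]
    (Q : ∀ v, X v → ℝ) (β : Fin C → ∀ v, X v → ℝ)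
    (hQβ_int : ∀ i v, Integrable (fun x => Q v x * β i v x) (μ v))
    (φ : Fin C → Fin V → ℝ)
    (hφ : ∀ i v, φ i v = ∫ x, Q v x * β i v x ∂(μ v))
    (hφ_pos : ∀ i v, 0 < φ i v)
    (tw : Fin C → ℝ)
    (htw : ∀ i, tw i = (∏ v, φ i v) ^ ((V : ℝ)⁻¹)) :
    ∀ (v : Fin V) (x : X v),
      ∫ y : ∀ u : {u : Fin V // u ≠ v}, X u.1,
          ((∑ j, tw j)⁻¹ *
            ∑ i, tw i ^ ((1 : ℤ) - (V : ℤ)) *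
              ∏ u : Fin V, (Q u (insertAt v x y u) * β i u (insertAt v x y u)))
        ∂(Measure.pi (fun u : {u : Fin V // u ≠ v} => μ u.1))
      = Q v x * (∑ j, tw j)⁻¹ * ∑ i, β i v x * tw i / φ i v := by
  intro v x
  have hprod_pos (i : Fin C) : 0 < ∏ u, φ i u := Finset.prod_pos fun u _ => hφ_pos i u
  have htw_pos (i : Fin C) : 0 < tw i := htw i ▸ Real.rpow_pos_of_pos (hprod_pos i) _
  have htw_pow (i : Fin C) : tw i ^ V = ∏ u, φ i u := by
    rw [htw, Real.rpow_inv_natCast_pow (hprod_pos i).le hV.ne']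
  have hcomponent (i : Fin C) :
      tw i ^ ((1 : ℤ) - V) * (Q v x * β i v x * ∏ u : {u : Fin V // u ≠ v}, φ i u.1)
        = Q v x * (β i v x * tw i / φ i v) := by
    rw [mul_left_comm, zpow_one_sub_mul_prod_subtype_ne (htw_pos i).ne' (htw_pow i)
      (hφ_pos i v).ne']
    ring
  rw [integral_mixture_prod_insertAt μ v x _ _ (f := fun i u z => Q u z * β i u z) hQβ_int]
  simp_rw [← hφ, hcomponent, ← Finset.mul_sum]
  ring

/-- In the IPC representation, the marginal of the v-th variate of
P(X) = (∑ᵢ w̃ᵢ)⁻¹ ∑ᵢ w̃ᵢ^{1−V} ∏ᵤ Qᵤ β⁽ⁱ⁾ᵤ equals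
Q_v(x_v) (∑ᵢ w̃ᵢ)⁻¹ ∑ᵢ β⁽ⁱ⁾_v(x_v) w̃ᵢ / φ⁽ⁱ⁾_v. -/
theorem statement_4 {V C : ℕ} (hV : 0 < V) {X : Fin V → Type*}
    [∀ v, MeasurableSpace (X v)]
    (μ : ∀ v, Measure (X v)) [∀ v, SigmaFinite (μ v)]
    (Q : ∀ v, X v → ℝ) (β : Fin C → ∀ v, X v → ℝ)
    (hQ_nonneg : ∀ v x, 0 ≤ Q v x)
    (hQ_one : ∀ v, ∫ x, Q v x ∂(μ v) = 1)
    (hβ_nonneg : ∀ i v x, 0 ≤ β i v x)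
    (hβ_sum : ∀ v (x : X v), ∑ i, β i v x = 1)
    (hQβ_meas : ∀ i v, Measurable (fun x => Q v x * β i v x))
    (hQβ_int : ∀ i v, Integrable (fun x => Q v x * β i v x) (μ v))
    (φ : Fin C → Fin V → ℝ)
    (hφ : ∀ i v, φ i v = ∫ x, Q v x * β i v x ∂(μ v))
    (hφ_pos : ∀ i v, 0 < φ i v)
    (tw : Fin C → ℝ)
    (htw : ∀ i, tw i = (∏ v, φ i v) ^ ((V : ℝ)⁻¹)) :
    ∀ (v : Fin V) (x : X v),
      ∫ y : ∀ u : {u : Fin V // u ≠ v}, X u.1,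
          ((∑ j, tw j)⁻¹ *
            ∑ i, tw i ^ ((1 : ℤ) - (V : ℤ)) *
              ∏ u : Fin V, (Q u (insertAt v x y u) * β i u (insertAt v x y u)))
        ∂(Measure.pi (fun u : {u : Fin V // u ≠ v} => μ u.1))
      = Q v x * (∑ j, tw j)⁻¹ * ∑ i, β i v x * tw i / φ i v :=
  statement_4_general hV μ Q β hQβ_int φ hφ hφ_pos tw htw
end

section
/- Let P* be the true joint density of (x_1,…,x_V) with marginals P*_v, and let P(X) = (∏_v P*_v(x_v)) · [∑_i ∏_v β^(i)_v(x_v) (E_{P*}[β^(i)_v])^{(1−V)/V}] / [∑_i ∏_v (E_{P*}[β^(i)_v])^{1/V}] be the mixture density parameterized by pseudo classifiers β^(i)_v. Then KL(P* || P) = C*(x_1,…,x_V) + neg_ctc_cost, where C* = ∫ P*(X) log(P*(X)/∏_v P*_v(x_v)) dX is the total correlation and neg_ctc_cost = −E_{P*}[log{[∑_i ∏_v β^(i)_v (E_{P*}[β^(i)_v])^{(1−V)/V}] / [∑_i ∏_v (E_{P*}[β^(i)_v])^{1/V}]}]. -/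
open MeasureTheory BigOperators

/-- KL(P* ‖ P) decomposes as the total correlation C* of the variates under P*
plus the negative cross total correlation cost, where P is the CIMM density
parameterized by the pseudo classifiers β⁽ⁱ⁾_v with pseudo weights
φ⁽ⁱ⁾_v = E_{P*}[β⁽ⁱ⁾_v]. -/
theorem statement_6 {V C : ℕ} {X : Fin V → Type*} [∀ v, MeasurableSpace (X v)]
    (μ : ∀ v, Measure (X v)) [∀ v, SigmaFinite (μ v)]
    (Pstar : (∀ v, X v) → ℝ) (Pstarv : ∀ v, X v → ℝ)
    (β : Fin C → ∀ v, X v → ℝ) (φ : Fin C → Fin V → ℝ)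
    (hPstar_nonneg : ∀ x, 0 ≤ Pstar x)
    (hPstar_one : ∫ x, Pstar x ∂(Measure.pi μ) = 1)
    (hβ_nonneg : ∀ i v x, 0 ≤ β i v x)
    (hβ_sum : ∀ v (x : X v), ∑ i, β i v x = 1)
    (hφ : ∀ i v, φ i v = ∫ x, Pstar x * β i v (x v) ∂(Measure.pi μ))
    (hφ_pos : ∀ i v, 0 < φ i v)
    (hmarg_pos : ∀ x : ∀ v, X v, 0 < ∏ v, Pstarv v (x v))
    (hN_pos : ∀ x : ∀ v, X v,
        0 < ∑ i, ∏ v, β i v (x v) * φ i v ^ ((1 - (V : ℝ)) / (V : ℝ)))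
    (hD_pos : 0 < ∑ i, ∏ v, φ i v ^ ((V : ℝ)⁻¹))
    (hint_tc : Integrable
        (fun x => Pstar x * Real.log (Pstar x / ∏ v, Pstarv v (x v))) (Measure.pi μ))
    (hint_ctc : Integrable
        (fun x => Pstar x * Real.log
          ((∑ i, ∏ v, β i v (x v) * φ i v ^ ((1 - (V : ℝ)) / (V : ℝ))) /
            (∑ i, ∏ v, φ i v ^ ((V : ℝ)⁻¹)))) (Measure.pi μ)) :
    -- KL(P* ‖ P)  =  C*  +  neg_ctc_cost
    ∫ x, Pstar x * Real.log (Pstar x /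
        ((∏ v, Pstarv v (x v)) *
          ((∑ i, ∏ v, β i v (x v) * φ i v ^ ((1 - (V : ℝ)) / (V : ℝ))) /
            (∑ i, ∏ v, φ i v ^ ((V : ℝ)⁻¹))))) ∂(Measure.pi μ)
      = (∫ x, Pstar x * Real.log (Pstar x / ∏ v, Pstarv v (x v)) ∂(Measure.pi μ))
        + (- ∫ x, Pstar x * Real.log
            ((∑ i, ∏ v, β i v (x v) * φ i v ^ ((1 - (V : ℝ)) / (V : ℝ))) /
              (∑ i, ∏ v, φ i v ^ ((V : ℝ)⁻¹))) ∂(Measure.pi μ)) := by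
  have key : ∀ x, Pstar x * Real.log (Pstar x /
        ((∏ v, Pstarv v (x v)) *
          ((∑ i, ∏ v, β i v (x v) * φ i v ^ ((1 - (V : ℝ)) / (V : ℝ))) /
            (∑ i, ∏ v, φ i v ^ ((V : ℝ)⁻¹)))))
      = Pstar x * Real.log (Pstar x / ∏ v, Pstarv v (x v))
        - Pstar x * Real.log
            ((∑ i, ∏ v, β i v (x v) * φ i v ^ ((1 - (V : ℝ)) / (V : ℝ))) /
              (∑ i, ∏ v, φ i v ^ ((V : ℝ)⁻¹))) := by
    intro x
    rcases eq_or_lt_of_le (hPstar_nonneg x) with h | h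
    · simp [← h]
    · have hA := hmarg_pos x
      have hR : 0 < (∑ i, ∏ v, β i v (x v) * φ i v ^ ((1 - (V : ℝ)) / (V : ℝ))) /
            (∑ i, ∏ v, φ i v ^ ((V : ℝ)⁻¹)) := div_pos (hN_pos x) hD_pos
      rw [div_mul_eq_div_div, Real.log_div (by positivity) hR.ne']
      ring
  simp only [key]
  rw [integral_sub hint_tc hint_ctc]
  ring
end

section
/- Let β^(i)_v be measurable functions with β^(i)_v ≥ 0 and ∑_{i=1}^C β^(i)_v(x_v) = 1 pointwise, and suppose E_{P*}[β^(i)_v] > 0. Then unnorm_neg_ctc_cost := −E_{P*}[log ∑_i ∏_v β^(i)_v (E_{P*}[β^(i)_v])^{(1−V)/V}] satisfies unnorm_neg_ctc_cost ≥ neg_ctc_cost, where neg_ctc_cost is as in eq. (28b). The key inequality is that ∑_{i=1}^C ∏_{v=1}^V (E_{P*}[β^(i)_v])^{1/V} ≤ (1/V) ∑_{i=1}^C ∑_{v=1}^V E_{P*}[β^(i)_v] = 1. -/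
open MeasureTheory BigOperators

/-- The surrogate cost `unnorm_neg_ctc_cost` dominates `neg_ctc_cost`; the key
inequality (AM–GM applied to the pseudo weights φ⁽ⁱ⁾_v = E_{P*}[β⁽ⁱ⁾_v]) is
∑ᵢ ∏_v φ⁽ⁱ⁾_v^{1/V} ≤ 1. -/
theorem statement_8 {V C : ℕ} (hV : 0 < V) {X : Fin V → Type*}
    [∀ v, MeasurableSpace (X v)]
    (μ : ∀ v, Measure (X v)) [∀ v, SigmaFinite (μ v)]
    (Pstar : (∀ v, X v) → ℝ)
    (β : Fin C → ∀ v, X v → ℝ) (φ : Fin C → Fin V → ℝ)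
    (hPstar_nonneg : ∀ x, 0 ≤ Pstar x)
    (hPstar_one : ∫ x, Pstar x ∂(Measure.pi μ) = 1)
    (hβ_meas : ∀ i v, Measurable (β i v))
    (hβ_nonneg : ∀ i v x, 0 ≤ β i v x)
    (hβ_sum : ∀ v (x : X v), ∑ i, β i v x = 1)
    (hβ_int : ∀ i v, Integrable (fun x => Pstar x * β i v (x v)) (Measure.pi μ))
    (hφ : ∀ i v, φ i v = ∫ x, Pstar x * β i v (x v) ∂(Measure.pi μ))
    (hφ_pos : ∀ i v, 0 < φ i v)
    (hint_unnorm : Integrable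
        (fun x => Pstar x * Real.log
          (∑ i, ∏ v, β i v (x v) * φ i v ^ ((1 - (V : ℝ)) / (V : ℝ)))) (Measure.pi μ))
    (hint_ctc : Integrable
        (fun x => Pstar x * Real.log
          ((∑ i, ∏ v, β i v (x v) * φ i v ^ ((1 - (V : ℝ)) / (V : ℝ))) /
            (∑ i, ∏ v, φ i v ^ ((V : ℝ)⁻¹)))) (Measure.pi μ)) :
    -- the key AM–GM inequality on the pseudo weights
    (∑ i, ∏ v, φ i v ^ ((V : ℝ)⁻¹)) ≤ 1 ∧
    -- unnorm_neg_ctc_cost ≥ neg_ctc_cost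
    (- ∫ x, Pstar x * Real.log
          (∑ i, ∏ v, β i v (x v) * φ i v ^ ((1 - (V : ℝ)) / (V : ℝ))) ∂(Measure.pi μ))
      ≥ - ∫ x, Pstar x * Real.log
          ((∑ i, ∏ v, β i v (x v) * φ i v ^ ((1 - (V : ℝ)) / (V : ℝ))) /
            (∑ i, ∏ v, φ i v ^ ((V : ℝ)⁻¹))) ∂(Measure.pi μ) := by
  have hVpos : (0:ℝ) < V := Nat.cast_pos.mpr hV
  -- ∑ i, φ i v = 1 for each v
  have hφsum : ∀ v, ∑ i, φ i v = 1 := by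
    intro v
    simp_rw [hφ]
    rw [← integral_finset_sum _ (fun i _ => hβ_int i v)]
    simp_rw [← Finset.mul_sum, hβ_sum, mul_one]
    exact hPstar_one
  -- key AM–GM
  have key : (∑ i, ∏ v, φ i v ^ ((V : ℝ)⁻¹)) ≤ 1 := by
    have h1 : ∀ i : Fin C, ∏ v, φ i v ^ ((V : ℝ)⁻¹)
        ≤ ∑ v, (V : ℝ)⁻¹ * φ i v := by
      intro i
      exact Real.geom_mean_le_arith_mean_weighted Finset.univ
        (fun _ => (V : ℝ)⁻¹) (φ i)
        (fun _ _ => by positivity)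
        (by simp [Finset.sum_const, mul_inv_cancel₀ hVpos.ne'])
        (fun v _ => (hφ_pos i v).le)
    calc (∑ i, ∏ v, φ i v ^ ((V : ℝ)⁻¹)) ≤ ∑ i, ∑ v, (V : ℝ)⁻¹ * φ i v :=
          Finset.sum_le_sum (fun i _ => h1 i)
      _ = 1 := by
          rw [Finset.sum_comm]
          simp_rw [← Finset.mul_sum, hφsum]
          simp [Finset.sum_const, inv_mul_cancel₀ hVpos.ne']
  refine ⟨key, ?_⟩
  -- the space is nonempty, hence C ≥ 1
  have hne : Nonempty (∀ v, X v) := by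
    by_contra h
    rw [not_nonempty_iff] at h
    simp [integral_of_isEmpty] at hPstar_one
  have hC : Nonempty (Fin C) := by
    by_contra h
    rw [not_nonempty_iff] at h
    obtain ⟨x⟩ := hne
    have := hβ_sum ⟨0, hV⟩ (x ⟨0, hV⟩)
    simp at this
  set S := ∑ i, ∏ v, φ i v ^ ((V : ℝ)⁻¹) with hS
  have hSpos : 0 < S := by
    apply Finset.sum_pos (fun i _ => Finset.prod_pos fun v _ => Real.rpow_pos_of_pos (hφ_pos i v) _)
    exact Finset.univ_nonempty
  -- pointwise inequality
  have hpt : ∀ x, Pstar x * Real.log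
        (∑ i, ∏ v, β i v (x v) * φ i v ^ ((1 - (V : ℝ)) / (V : ℝ)))
      ≤ Pstar x * Real.log
        ((∑ i, ∏ v, β i v (x v) * φ i v ^ ((1 - (V : ℝ)) / (V : ℝ))) / S) := by
    intro x
    set A := ∑ i, ∏ v, β i v (x v) * φ i v ^ ((1 - (V : ℝ)) / (V : ℝ)) with hA
    apply mul_le_mul_of_nonneg_left _ (hPstar_nonneg x)
    have hAnn : 0 ≤ A :=
      Finset.sum_nonneg fun i _ => Finset.prod_nonneg fun v _ =>
        mul_nonneg (hβ_nonneg i v (x v)) (Real.rpow_pos_of_pos (hφ_pos i v) _).le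
    rcases eq_or_lt_of_le hAnn with h0 | hApos
    · rw [← h0]; simp
    · apply Real.log_le_log hApos
      rw [le_div_iff₀ hSpos]
      nlinarith [key, hApos]
  have := integral_mono hint_unnorm hint_ctc hpt
  linarith [this]
end

section
/- (Necessary condition for identifiability.) A nonparametric conditional independence bivariate mixture model P(x,y) = ∑_{i=1}^C w_i f^(i)_x(x) f^(i)_y(y) with C ≥ 2 components is uniquely identifiable up to permutation of component labels only if for every ordered pair i ≠ j and each variate t ∈ {x,y}: esssup_t [ w_i f^(i)_t(t) / (w_i f^(i)_t(t) + w_j f^(j)_t(t)) ] = 1, where the essential supremum is with respect to the mixture's marginal measure on t. -/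
/-!
Identifiability determines the weights up to permutation, so every alternative representation of
the mixture density must have the same `∑ₖ wₖ²`. If some `wᵢ = 0`, splitting a component of
positive weight into two equal halves (one relabelled `i`) changes this sum. If the essential
supremum of `wᵢ fxᵢ / (wᵢ fxᵢ + wⱼ fxⱼ)` is below `1`, then `wᵢ fxᵢ ≤ K wⱼ fxⱼ` almost everywhere,
so for every small `δ > 0` the mass `δ wᵢ fxᵢ ⊗ fyⱼ` can be moved from component `j` to
component `i`, giving weights `wᵢ (1 + δ)` and `wⱼ - δ wᵢ`; the sum of squares is preserved for
at most one such `δ`. The variate `y` is the variate `x` after exchanging the two factors.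
-/

open MeasureTheory Function

lemma sum_eq_add_add_sum_compl_pair {ι M : Type*} [Fintype ι] [DecidableEq ι] [AddCommMonoid M]
    {i j : ι} (hij : i ≠ j) (f : ι → M) :
    ∑ k, f k = f i + f j + ∑ k ∈ ({i, j} : Finset ι)ᶜ, f k := by
  rw [← Finset.sum_add_sum_compl {i, j} f, Finset.sum_pair hij]

lemma update_update_of_forall {α β : Type*} [DecidableEq α] {P : β → Prop} {v : α → β}
    (hv : ∀ k, P (v k)) {a b : β} (ha : P a) (hb : P b) (i j k : α) :
    P (update (update v i a) j b k) := by
  rw [update_apply, update_apply]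
  split_ifs
  exacts [hb, ha, hv k]

section Mixture

variable {ι X Y : Type*} [Fintype ι] {w : ι → ℝ} {fx : ι → X → ℝ} {fy : ι → Y → ℝ}

def mixtureDensity (w : ι → ℝ) (fx : ι → X → ℝ) (fy : ι → Y → ℝ) (p : X × Y) : ℝ :=
  ∑ i, w i * fx i p.1 * fy i p.2

lemma mixtureDensity_swap (p : X × Y) :
    mixtureDensity w fy fx p.swap = mixtureDensity w fx fy p :=
  Finset.sum_congr rfl fun _ _ => mul_right_comm _ _ _

variable [MeasurableSpace X] [MeasurableSpace Y] {μ : Measure X} {ν : Measure Y}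

structure IsDensity (μ : Measure X) (f : X → ℝ) : Prop where
  measurable : Measurable f
  nonneg : ∀ x, 0 ≤ f x
  integral_eq_one : ∫ x, f x ∂μ = 1

lemma IsDensity.integrable {f : X → ℝ} (hf : IsDensity μ f) : Integrable f μ :=
  Integrable.of_integral_ne_zero (by simp [hf.integral_eq_one])

lemma IsDensity.max_affineCombination {f g : X → ℝ} (hf : IsDensity μ f) (hg : IsDensity μ g)
    {s t : ℝ} (hst : s + t = 1) (hnonneg : ∀ᵐ x ∂μ, 0 ≤ s * f x + t * g x) :
    IsDensity μ fun x => max (s * f x + t * g x) 0 where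
  measurable := by have := hf.measurable; have := hg.measurable; fun_prop
  nonneg _ := le_max_right _ _
  integral_eq_one := by
    rw [integral_congr_ae (hnonneg.mono fun x hx => max_eq_left hx),
      integral_add (hf.integrable.const_mul s) (hg.integrable.const_mul t),
      integral_const_mul, integral_const_mul, hf.integral_eq_one, hg.integral_eq_one]
    linarith

structure IsMixture (μ : Measure X) (ν : Measure Y) (w : ι → ℝ) (fx : ι → X → ℝ)
    (fy : ι → Y → ℝ) : Prop where
  weight_nonneg : ∀ i, 0 ≤ w i
  sum_weight : ∑ i, w i = 1
  density_fst : ∀ i, IsDensity μ (fx i)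
  density_snd : ∀ i, IsDensity ν (fy i)

lemma IsMixture.swap (h : IsMixture μ ν w fx fy) : IsMixture ν μ w fy fx :=
  ⟨h.weight_nonneg, h.sum_weight, h.density_snd, h.density_fst⟩

lemma IsMixture.isProbabilityMeasure_withDensity (h : IsMixture μ ν w fx fy) :
    IsProbabilityMeasure (μ.withDensity fun x => ENNReal.ofReal (∑ k, w k * fx k x)) := by
  have hint : ∀ k, Integrable (fun x => w k * fx k x) μ :=
    fun k => (h.density_fst k).integrable.const_mul _
  constructor
  rw [withDensity_apply _ MeasurableSet.univ, setLIntegral_univ,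
    ← ofReal_integral_eq_lintegral_ofReal (integrable_finsetSum _ fun k _ => hint k)
      (ae_of_all _ fun x => Finset.sum_nonneg fun k _ =>
        mul_nonneg (h.weight_nonneg k) ((h.density_fst k).nonneg x)),
    integral_finsetSum _ fun k _ => hint k]
  simp [integral_const_mul, (h.density_fst _).integral_eq_one, h.sum_weight]

def WeightsIdentifiable (μ : Measure X) (ν : Measure Y) (w : ι → ℝ) (fx : ι → X → ℝ)
    (fy : ι → Y → ℝ) : Prop :=
  ∀ w' gx gy, IsMixture μ ν w' gx gy →
    mixtureDensity w' gx gy =ᵐ[μ.prod ν] mixtureDensity w fx fy →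
    ∃ σ : Equiv.Perm ι, ∀ i, w' i = w (σ i)

lemma WeightsIdentifiable.swap [SFinite μ] [SFinite ν]
    (hid : WeightsIdentifiable μ ν w fx fy) :
    WeightsIdentifiable ν μ w fy fx := fun w' gy gx h' heq =>
  hid w' gx gy h'.swap <| by
    filter_upwards [Measure.measurePreserving_swap.quasiMeasurePreserving.ae heq] with p hp
    rwa [mixtureDensity_swap, mixtureDensity_swap] at hp

lemma WeightsIdentifiable.sq_add_sq_eq_of_replace [DecidableEq ι]
    (hid : WeightsIdentifiable μ ν w fx fy) (h : IsMixture μ ν w fx fy) {i j : ι} (hij : i ≠ j)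
    {ai aj : ℝ} {gi gj : X → ℝ} {hi hj : Y → ℝ} (hai : 0 ≤ ai) (haj : 0 ≤ aj)
    (hsum : ai + aj = w i + w j) (hgi : IsDensity μ gi) (hgj : IsDensity μ gj)
    (hhi : IsDensity ν hi) (hhj : IsDensity ν hj)
    (hpair : ∀ᵐ p ∂μ.prod ν, ai * gi p.1 * hi p.2 + aj * gj p.1 * hj p.2
      = w i * fx i p.1 * fy i p.2 + w j * fx j p.1 * fy j p.2) :
    ai ^ 2 + aj ^ 2 = w i ^ 2 + w j ^ 2 := by
  set w' := update (update w i ai) j aj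
  set gx := update (update fx i gi) j gj
  set gy := update (update fy i hi) j hj
  have hi' : w' i = ai ∧ gx i = gi ∧ gy i = hi := by simp [w', gx, gy, update_of_ne hij]
  have hj' : w' j = aj ∧ gx j = gj ∧ gy j = hj := by simp [w', gx, gy]
  have hrest : ∀ k ∈ ({i, j} : Finset ι)ᶜ, w' k = w k ∧ gx k = fx k ∧ gy k = fy k := by
    intro k hk
    simp only [Finset.mem_compl, Finset.mem_insert, Finset.mem_singleton, not_or] at hk
    simp [w', gx, gy, update_of_ne hk.1, update_of_ne hk.2]
  have hmix : IsMixture μ ν w' gx gy := by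
    refine ⟨update_update_of_forall h.weight_nonneg hai haj i j, ?_,
      update_update_of_forall h.density_fst hgi hgj i j,
      update_update_of_forall h.density_snd hhi hhj i j⟩
    rw [sum_eq_add_add_sum_compl_pair hij, hi'.1, hj'.1, hsum,
      Finset.sum_congr rfl fun k hk => (hrest k hk).1, ← sum_eq_add_add_sum_compl_pair hij,
      h.sum_weight]
  obtain ⟨σ, hσ⟩ := hid w' gx gy hmix <| by
    filter_upwards [hpair] with p hp
    unfold mixtureDensity
    rw [sum_eq_add_add_sum_compl_pair hij, sum_eq_add_add_sum_compl_pair hij,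
      hi'.1, hi'.2.1, hi'.2.2, hj'.1, hj'.2.1, hj'.2.2, hp,
      Finset.sum_congr rfl fun k hk => by
        rw [(hrest k hk).1, (hrest k hk).2.1, (hrest k hk).2.2]]
  have hsq : ∑ k, w' k ^ 2 = ∑ k, w k ^ 2 := by
    simp_rw [hσ]
    exact Equiv.sum_comp σ fun k => w k ^ 2
  rwa [sum_eq_add_add_sum_compl_pair hij, sum_eq_add_add_sum_compl_pair hij,
    hi'.1, hj'.1, Finset.sum_congr rfl fun k hk => by rw [(hrest k hk).1], add_left_inj] at hsq

lemma IsMixture.exists_weight_pos (h : IsMixture μ ν w fx fy) : ∃ m, 0 < w m := by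
  by_contra! hle
  linarith [Finset.sum_nonpos fun k (_ : k ∈ Finset.univ) => hle k, h.sum_weight]

lemma WeightsIdentifiable.weight_pos [DecidableEq ι] (hid : WeightsIdentifiable μ ν w fx fy)
    (h : IsMixture μ ν w fx fy) (i : ι) : 0 < w i := by
  obtain ⟨m, hm⟩ := h.exists_weight_pos
  by_contra! hi
  have hwi : w i = 0 := le_antisymm hi (h.weight_nonneg i)
  have hmi : i ≠ m := by rintro rfl; linarith
  have hsq := hid.sq_add_sq_eq_of_replace h hmi (ai := w m / 2) (aj := w m / 2)
    (by positivity) (by positivity) (by rw [hwi]; ring) (h.density_fst m) (h.density_fst m)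
    (h.density_snd m) (h.density_snd m)
    (ae_of_all _ fun p => by rw [hwi]; ring)
  nlinarith

lemma exists_ae_mul_le_of_essSup_div_add_lt_one {a b s : X → ℝ} (ha : ∀ x, 0 ≤ a x)
    (hb : ∀ x, 0 ≤ b x) (has : ∀ x, a x ≤ s x) (hs : Measurable s)
    (hlt : essSup (fun x => a x / (a x + b x))
      (μ.withDensity fun x => ENNReal.ofReal (s x)) < 1) :
    ∃ t > 0, ∀ᵐ x ∂μ, t * a x ≤ b x := by
  obtain ⟨c, hc, hc1⟩ := exists_between (max_lt hlt (by norm_num : (1 / 2 : ℝ) < 1))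
  have hc0 : 0 < c := by linarith [(le_max_right _ _).trans_lt hc]
  have hratio : ∀ᵐ x ∂μ, ENNReal.ofReal (s x) ≠ 0 → a x / (a x + b x) < c :=
    (ae_withDensity_iff hs.ennreal_ofReal).1 <|
      ae_lt_of_essSup_lt ((le_max_left _ _).trans_lt hc) <| Filter.isBoundedUnder_of
        ⟨1, fun x => div_le_one_of_le₀ (le_add_of_nonneg_right (hb x))
          (add_nonneg (ha x) (hb x))⟩
  refine ⟨(1 - c) / c, div_pos (by linarith) hc0, hratio.mono fun x hx => ?_⟩
  rw [div_mul_eq_mul_div, div_le_iff₀ hc0]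
  rcases (ha x).eq_or_lt with hax | hax
  · rw [← hax]; nlinarith [hb x]
  · have hsx : ENNReal.ofReal (s x) ≠ 0 := by simpa using hax.trans_le (has x)
    have := (div_lt_iff₀ (by linarith [hb x])).1 (hx hsx)
    linarith

lemma WeightsIdentifiable.sq_add_sq_eq_of_shift [DecidableEq ι]
    (hid : WeightsIdentifiable μ ν w fx fy) (h : IsMixture μ ν w fx fy) {i j : ι} (hij : i ≠ j)
    {δ : ℝ} (hδ : 0 < δ) (hδw : δ * w i < w j)
    (hdom : ∀ᵐ x ∂μ, δ * (w i * fx i x) ≤ w j * fx j x) :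
    (w i * (1 + δ)) ^ 2 + (w j - δ * w i) ^ 2 = w i ^ 2 + w j ^ 2 := by
  have hD : 0 < w j - δ * w i := by linarith
  have hgx_nonneg : ∀ᵐ x ∂μ,
      0 ≤ w j / (w j - δ * w i) * fx j x + -(δ * w i) / (w j - δ * w i) * fx i x := by
    filter_upwards [hdom] with x hx
    rw [div_mul_eq_mul_div, div_mul_eq_mul_div, ← add_div]
    exact div_nonneg (by linarith) hD.le
  have hgy_nonneg : ∀ y, 0 ≤ 1 / (1 + δ) * fy i y + δ / (1 + δ) * fy j y := fun y => by
    have := (h.density_snd i).nonneg y; have := (h.density_snd j).nonneg y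
    positivity
  have hgx := (h.density_fst j).max_affineCombination (h.density_fst i)
    (by field_simp; ring) hgx_nonneg
  have hgy := (h.density_snd i).max_affineCombination (h.density_snd j)
    (by field_simp) (ae_of_all _ hgy_nonneg)
  refine hid.sq_add_sq_eq_of_replace h hij (by nlinarith [h.weight_nonneg i]) hD.le (by ring)
    (h.density_fst i) hgx hgy (h.density_snd j) ?_
  filter_upwards [Measure.quasiMeasurePreserving_fst.ae hgx_nonneg] with p hx
  have ex : (w j - δ * w i) * (w j / (w j - δ * w i) * fx j p.1
      + -(δ * w i) / (w j - δ * w i) * fx i p.1) = w j * fx j p.1 - δ * w i * fx i p.1 := by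
    field_simp
    ring
  have ey : w i * (1 + δ) * (1 / (1 + δ) * fy i p.2 + δ / (1 + δ) * fy j p.2)
      = w i * (fy i p.2 + δ * fy j p.2) := by
    field_simp
  simp only [max_eq_left hx, max_eq_left (hgy_nonneg p.2)]
  linear_combination fx i p.1 * ey + fy j p.2 * ex

lemma WeightsIdentifiable.essSup_eq_one [DecidableEq ι]
    (hid : WeightsIdentifiable μ ν w fx fy)
    (h : IsMixture μ ν w fx fy) {i j : ι} (hij : i ≠ j) :
    essSup (fun x => w i * fx i x / (w i * fx i x + w j * fx j x))
      (μ.withDensity fun x => ENNReal.ofReal (∑ k, w k * fx k x)) = 1 := by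
  have ha x : 0 ≤ w i * fx i x := mul_nonneg (h.weight_nonneg i) ((h.density_fst i).nonneg x)
  have hb x : 0 ≤ w j * fx j x := mul_nonneg (h.weight_nonneg j) ((h.density_fst j).nonneg x)
  have := h.isProbabilityMeasure_withDensity
  refine le_antisymm (essSup_le_of_ae_le _ (ae_of_all _ fun x =>
      div_le_one_of_le₀ (le_add_of_nonneg_right (hb x)) (add_nonneg (ha x) (hb x)))
    (Filter.isCoboundedUnder_le_of_le _ fun x => div_nonneg (ha x) (add_nonneg (ha x) (hb x))))
    (not_lt.1 fun hlt => ?_)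
  obtain ⟨t, ht, hdom⟩ := exists_ae_mul_le_of_essSup_div_add_lt_one ha hb
    (fun x => Finset.single_le_sum (fun k _ => mul_nonneg (h.weight_nonneg k)
      ((h.density_fst k).nonneg x)) (Finset.mem_univ i))
    (Finset.measurable_sum _ fun k _ => (h.density_fst k).measurable.const_mul _) hlt
  have hwi := hid.weight_pos h i
  have htw : t * w i ≤ w j := by
    simpa [integral_const_mul, (h.density_fst _).integral_eq_one] using integral_mono_ae
      (((h.density_fst i).integrable.const_mul _).const_mul t)
      ((h.density_fst j).integrable.const_mul _) hdom
  have hshift : ∀ δ, 0 < δ → δ < t → δ * w i = w j - w i := fun δ hδ hδt => by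
    have hsq := hid.sq_add_sq_eq_of_shift h hij hδ (by nlinarith) <| hdom.mono fun x hx => by
      nlinarith [ha x]
    have : 2 * δ * w i * (δ * w i - (w j - w i)) = 0 := by linear_combination hsq
    simpa [hδ.ne', hwi.ne', sub_eq_zero] using this
  nlinarith [hshift (t / 2) (by positivity) (by linarith),
    hshift (t / 4) (by positivity) (by linarith)]

end Mixture

theorem statement_12_general {C : ℕ}
    {Xt Yt : Type*} [MeasurableSpace Xt] [MeasurableSpace Yt]
    (μ : Measure Xt) (ν : Measure Yt) [SigmaFinite μ] [SigmaFinite ν]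
    (w : Fin C → ℝ) (fx : Fin C → Xt → ℝ) (fy : Fin C → Yt → ℝ)
    (hw_nonneg : ∀ i, 0 ≤ w i) (hw_sum : ∑ i, w i = 1)
    (hfx_meas : ∀ i, Measurable (fx i)) (hfy_meas : ∀ i, Measurable (fy i))
    (hfx_nonneg : ∀ i x, 0 ≤ fx i x) (hfy_nonneg : ∀ i y, 0 ≤ fy i y)
    (hfx_one : ∀ i, ∫ x, fx i x ∂μ = 1) (hfy_one : ∀ i, ∫ y, fy i y ∂ν = 1)
    -- identifiability up to permutation of the component labels:
    (hident : ∀ (w' : Fin C → ℝ) (gx : Fin C → Xt → ℝ) (gy : Fin C → Yt → ℝ),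
        (∀ i, 0 ≤ w' i) → ∑ i, w' i = 1 →
        (∀ i, Measurable (gx i)) → (∀ i, Measurable (gy i)) →
        (∀ i x, 0 ≤ gx i x) → (∀ i y, 0 ≤ gy i y) →
        (∀ i, ∫ x, gx i x ∂μ = 1) → (∀ i, ∫ y, gy i y ∂ν = 1) →
        (∀ᵐ p ∂(μ.prod ν),
          ∑ i, w' i * gx i p.1 * gy i p.2 = ∑ i, w i * fx i p.1 * fy i p.2) →
        ∃ σ : Equiv.Perm (Fin C),
          ∀ i, w' i = w (σ i) ∧ gx i =ᵐ[μ] fx (σ i) ∧ gy i =ᵐ[ν] fy (σ i)) :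
    ∀ i j : Fin C, i ≠ j →
      essSup (fun x => w i * fx i x / (w i * fx i x + w j * fx j x))
          (μ.withDensity (fun x => ENNReal.ofReal (∑ k, w k * fx k x))) = 1 ∧
      essSup (fun y => w i * fy i y / (w i * fy i y + w j * fy j y))
          (ν.withDensity (fun y => ENNReal.ofReal (∑ k, w k * fy k y))) = 1 := by
  have h : IsMixture μ ν w fx fy := ⟨hw_nonneg, hw_sum,
    fun i => ⟨hfx_meas i, hfx_nonneg i, hfx_one i⟩, fun i => ⟨hfy_meas i, hfy_nonneg i, hfy_one i⟩⟩
  have hid : WeightsIdentifiable μ ν w fx fy := fun w' gx gy h' heq =>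
    (hident w' gx gy h'.weight_nonneg h'.sum_weight (fun i => (h'.density_fst i).measurable)
      (fun i => (h'.density_snd i).measurable) (fun i => (h'.density_fst i).nonneg)
      (fun i => (h'.density_snd i).nonneg) (fun i => (h'.density_fst i).integral_eq_one)
      (fun i => (h'.density_snd i).integral_eq_one) heq).imp fun _ hσ i => (hσ i).1
  exact fun i j hij => ⟨hid.essSup_eq_one h hij, hid.swap.essSup_eq_one h.swap hij⟩

/-- Necessary condition for identifiability of a nonparametric conditional
independence bivariate mixture model (Theorem 1 of the paper): if the instance
is uniquely identifiable up to permutation of the component labels, then for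
every ordered pair i ≠ j and each variate, the essential supremum (w.r.t. the
mixture marginal measure) of wᵢ f⁽ⁱ⁾ / (wᵢ f⁽ⁱ⁾ + wⱼ f⁽ʲ⁾) equals 1. -/
theorem statement_12 {C : ℕ} (hC : 2 ≤ C)
    {Xt Yt : Type*} [MeasurableSpace Xt] [MeasurableSpace Yt]
    (μ : Measure Xt) (ν : Measure Yt) [SigmaFinite μ] [SigmaFinite ν]
    (w : Fin C → ℝ) (fx : Fin C → Xt → ℝ) (fy : Fin C → Yt → ℝ)
    (hw_nonneg : ∀ i, 0 ≤ w i) (hw_sum : ∑ i, w i = 1)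
    (hfx_meas : ∀ i, Measurable (fx i)) (hfy_meas : ∀ i, Measurable (fy i))
    (hfx_nonneg : ∀ i x, 0 ≤ fx i x) (hfy_nonneg : ∀ i y, 0 ≤ fy i y)
    (hfx_one : ∀ i, ∫ x, fx i x ∂μ = 1) (hfy_one : ∀ i, ∫ y, fy i y ∂ν = 1)
    -- identifiability up to permutation of the component labels:
    (hident : ∀ (w' : Fin C → ℝ) (gx : Fin C → Xt → ℝ) (gy : Fin C → Yt → ℝ),
        (∀ i, 0 ≤ w' i) → ∑ i, w' i = 1 →
        (∀ i, Measurable (gx i)) → (∀ i, Measurable (gy i)) →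
        (∀ i x, 0 ≤ gx i x) → (∀ i y, 0 ≤ gy i y) →
        (∀ i, ∫ x, gx i x ∂μ = 1) → (∀ i, ∫ y, gy i y ∂ν = 1) →
        (∀ᵐ p ∂(μ.prod ν),
          ∑ i, w' i * gx i p.1 * gy i p.2 = ∑ i, w i * fx i p.1 * fy i p.2) →
        ∃ σ : Equiv.Perm (Fin C),
          ∀ i, w' i = w (σ i) ∧ gx i =ᵐ[μ] fx (σ i) ∧ gy i =ᵐ[ν] fy (σ i)) :
    ∀ i j : Fin C, i ≠ j →
      essSup (fun x => w i * fx i x / (w i * fx i x + w j * fx j x))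
          (μ.withDensity (fun x => ENNReal.ofReal (∑ k, w k * fx k x))) = 1 ∧
      essSup (fun y => w i * fy i y / (w i * fy i y + w j * fy j y))
          (ν.withDensity (fun y => ENNReal.ofReal (∑ k, w k * fy k y))) = 1 :=
  statement_12_general μ ν w fx fy hw_nonneg hw_sum hfx_meas hfy_meas hfx_nonneg hfy_nonneg hfx_one
    hfy_one hident
end

section
/- (Two-parameter family of observationally equivalent two-component bivariate CIMMs.) For a bivariate CIMM with C = 2, weights w_1, w_2 > 0, marginals P_x = w_1 f^(1)_x + w_2 f^(2)_x and P_y = w_1 f^(1)_y + w_2 f^(2)_y, and for any γ > 0 and 0 < w'_1 < 1 with w'_2 = 1 − w'_1, the functions g^(1)_x = P_x + γ w'_2 √(w_1 w_2/(w'_1 w'_2)) (f^(1)_x − f^(2)_x), g^(2)_x = P_x − γ w'_1 √(w_1 w_2/(w'_1 w'_2)) (f^(1)_x − f^(2)_x), g^(1)_y = P_y + (w'_2/γ) √(w_1 w_2/(w'_1 w'_2)) (f^(1)_y − f^(2)_y), g^(2)_y = P_y − (w'_1/γ) √(w_1 w_2/(w'_1 w'_2)) (f^(1)_y − f^(2)_y)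 satisfy ∑_{i=1}^2 w'_i g^(i)_x(x) g^(i)_y(y) = ∑_{i=1}^2 w_i f^(i)_x(x) f^(i)_y(y) pointwise, and each g^(i)_x, g^(i)_y integrates to 1. -/
/-!
Writing `P = w₁ f₁ + w₂ f₂`, `Q = w₁ h₁ + w₂ h₂` for the two marginals, the joint density is
`P Q + w₁ w₂ (f₁ - f₂)(h₁ - h₂)` as soon as `w₁ + w₂ = 1`. Perturbing the marginals along the
differences with coefficients proportional to `w'₂, -w'₁` makes the cross terms cancel in the
`w'`-mixture and leaves `w'₁ w'₂ · (γ s)(s / γ) · (f₁ - f₂)(h₁ - h₂)`, which is the missing term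
exactly when `w'₁ w'₂ s² = w₁ w₂`. Since `f₁ - f₂` integrates to zero, each perturbed
marginal still integrates to `w₁ + w₂ = 1`.
-/

open MeasureTheory

theorem two_component_mixture_reparam {R : Type*} [CommRing R]
    (w₁ w₂ v a₁ a₂ b₁ b₂ u t : R) (hw : w₁ + w₂ = 1) (hut : v * (1 - v) * (u * t) = w₁ * w₂) :
    v * ((w₁ * a₁ + w₂ * a₂) + u * (1 - v) * (a₁ - a₂)) *
        ((w₁ * b₁ + w₂ * b₂) + t * (1 - v) * (b₁ - b₂)) +
      (1 - v) * ((w₁ * a₁ + w₂ * a₂) - u * v * (a₁ - a₂)) *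
        ((w₁ * b₁ + w₂ * b₂) - t * v * (b₁ - b₂)) =
      w₁ * a₁ * b₁ + w₂ * a₂ * b₂ := by
  linear_combination (a₁ - a₂) * (b₁ - b₂) * hut + (w₁ * a₁ * b₁ + w₂ * a₂ * b₂) * hw

section Integral

variable {X : Type*} [MeasurableSpace X] {μ : Measure X} {f₁ f₂ : X → ℝ}

theorem integral_mixture_add_mul_sub (h₁ : Integrable f₁ μ) (h₂ : Integrable f₂ μ)
    (h₁_one : ∫ x, f₁ x ∂μ = 1) (h₂_one : ∫ x, f₂ x ∂μ = 1) {w₁ w₂ : ℝ} (hw : w₁ + w₂ = 1)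
    (c : ℝ) : ∫ x, (w₁ * f₁ x + w₂ * f₂ x) + c * (f₁ x - f₂ x) ∂μ = 1 := by
  calc ∫ x, (w₁ * f₁ x + w₂ * f₂ x) + c * (f₁ x - f₂ x) ∂μ
      = ∫ x, (w₁ + c) * f₁ x + (w₂ - c) * f₂ x ∂μ := by congr 1; ext x; ring
    _ = (w₁ + c) + (w₂ - c) := by
      rw [integral_add (h₁.const_mul _) (h₂.const_mul _), integral_const_mul,
        integral_const_mul, h₁_one, h₂_one, mul_one, mul_one]
    _ = 1 := by linear_combination hw

theorem integral_mixture_sub_mul_sub (h₁ : Integrable f₁ μ) (h₂ : Integrable f₂ μ)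
    (h₁_one : ∫ x, f₁ x ∂μ = 1) (h₂_one : ∫ x, f₂ x ∂μ = 1) {w₁ w₂ : ℝ} (hw : w₁ + w₂ = 1)
    (c : ℝ) : ∫ x, (w₁ * f₁ x + w₂ * f₂ x) - c * (f₁ x - f₂ x) ∂μ = 1 := by
  simpa only [neg_mul, ← sub_eq_add_neg] using
    integral_mixture_add_mul_sub h₁ h₂ h₁_one h₂_one hw (-c)

end Integral

/-- The two-parameter family (γ, w'₁) of Hall–Zhou (eq. A.2): the modified
component functions g reproduce the same joint mixture density pointwise, and
each g integrates to 1. -/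
theorem statement_15 {Xt Yt : Type*} [MeasurableSpace Xt] [MeasurableSpace Yt]
    (μ : Measure Xt) (ν : Measure Yt)
    (w1 w2 : ℝ) (hw1 : 0 < w1) (hw2 : 0 < w2) (hw : w1 + w2 = 1)
    (f1x f2x : Xt → ℝ) (f1y f2y : Yt → ℝ)
    (hf1x_int : Integrable f1x μ) (hf2x_int : Integrable f2x μ)
    (hf1y_int : Integrable f1y ν) (hf2y_int : Integrable f2y ν)
    (hf1x_one : ∫ x, f1x x ∂μ = 1) (hf2x_one : ∫ x, f2x x ∂μ = 1)
    (hf1y_one : ∫ y, f1y y ∂ν = 1) (hf2y_one : ∫ y, f2y y ∂ν = 1)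
    (γ w1' : ℝ) (hγ : 0 < γ) (hw1' : 0 < w1') (hw1'lt : w1' < 1) :
    (∀ (x : Xt) (y : Yt),
      w1' * ((w1 * f1x x + w2 * f2x x) +
              γ * (1 - w1') * Real.sqrt (w1 * w2 / (w1' * (1 - w1'))) * (f1x x - f2x x)) *
            ((w1 * f1y y + w2 * f2y y) +
              ((1 - w1') / γ) * Real.sqrt (w1 * w2 / (w1' * (1 - w1'))) * (f1y y - f2y y)) +
      (1 - w1') * ((w1 * f1x x + w2 * f2x x) -
              γ * w1' * Real.sqrt (w1 * w2 / (w1' * (1 - w1'))) * (f1x x - f2x x)) *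
            ((w1 * f1y y + w2 * f2y y) -
              (w1' / γ) * Real.sqrt (w1 * w2 / (w1' * (1 - w1'))) * (f1y y - f2y y))
        = w1 * f1x x * f1y y + w2 * f2x x * f2y y) ∧
    (∫ x, ((w1 * f1x x + w2 * f2x x) +
        γ * (1 - w1') * Real.sqrt (w1 * w2 / (w1' * (1 - w1'))) * (f1x x - f2x x)) ∂μ = 1) ∧
    (∫ x, ((w1 * f1x x + w2 * f2x x) -
        γ * w1' * Real.sqrt (w1 * w2 / (w1' * (1 - w1'))) * (f1x x - f2x x)) ∂μ = 1) ∧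
    (∫ y, ((w1 * f1y y + w2 * f2y y) +
        ((1 - w1') / γ) * Real.sqrt (w1 * w2 / (w1' * (1 - w1'))) * (f1y y - f2y y)) ∂ν = 1) ∧
    (∫ y, ((w1 * f1y y + w2 * f2y y) -
        (w1' / γ) * Real.sqrt (w1 * w2 / (w1' * (1 - w1'))) * (f1y y - f2y y)) ∂ν = 1) := by
  set s := Real.sqrt (w1 * w2 / (w1' * (1 - w1')))
  have hw2' : 0 < 1 - w1' := sub_pos.mpr hw1'lt
  have hs : w1' * (1 - w1') * (γ * s * (s / γ)) = w1 * w2 := by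
    have hs_sq : s ^ 2 = w1 * w2 / (w1' * (1 - w1')) := Real.sq_sqrt (by positivity)
    field_simp
    rw [hs_sq]
    field_simp
  refine ⟨fun x y => ?_, integral_mixture_add_mul_sub hf1x_int hf2x_int hf1x_one hf2x_one hw _,
    integral_mixture_sub_mul_sub hf1x_int hf2x_int hf1x_one hf2x_one hw _,
    integral_mixture_add_mul_sub hf1y_int hf2y_int hf1y_one hf2y_one hw _,
    integral_mixture_sub_mul_sub hf1y_int hf2y_int hf1y_one hf2y_one hw _⟩
  linear_combination two_component_mixture_reparam w1 w2 w1' (f1x x) (f2x x) (f1y y) (f2y y)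
    (γ * s) (s / γ) hw hs
end

section
/- In the two-component family of equation (A.2), taking γ = 1 and w'_1 = w_1 recovers the original instance: g^(i)_x = f^(i)_x and g^(i)_y = f^(i)_y for i = 1, 2. Conversely, if (γ, w'_1) ≠ (1, w_1) and f^(1)_x − f^(2)_x and f^(1)_y − f^(2)_y are not almost surely zero, then the resulting (w'_i, g^(i)_x, g^(i)_y) differs from (w_i, f^(i)_x, f^(i)_y) (up to a.s. equality), even allowing the index swap realized by (γ, w'_1) ↦ (−γ, 1 − w'_1). -/
open MeasureTheory

/-- In the two-parameter family (A.2): taking γ = 1, w'₁ = w₁ recovers the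
original instance pointwise; conversely if (γ, w'₁) ≠ (1, w₁) and the component
densities are genuinely distinct (not a.s. equal) in each variate, then the
resulting family differs from the original, even allowing the index swap. -/
theorem statement_16 {Xt Yt : Type*} [MeasurableSpace Xt] [MeasurableSpace Yt]
    (μ : Measure Xt) (ν : Measure Yt)
    (w1 w2 : ℝ) (hw1 : 0 < w1) (hw2 : 0 < w2) (hw : w1 + w2 = 1)
    (f1x f2x : Xt → ℝ) (f1y f2y : Yt → ℝ)
    (hΔx : ¬ (f1x =ᵐ[μ] f2x)) (hΔy : ¬ (f1y =ᵐ[ν] f2y))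
    (γ w1' : ℝ) (hγ : 0 < γ) (hw1' : 0 < w1') (hw1'lt : w1' < 1)
    -- the two-parameter family of candidate component functions:
    (g1x g2x : Xt → ℝ) (g1y g2y : Yt → ℝ)
    (hg1x : ∀ x, g1x x = (w1 * f1x x + w2 * f2x x) +
        γ * (1 - w1') * Real.sqrt (w1 * w2 / (w1' * (1 - w1'))) * (f1x x - f2x x))
    (hg2x : ∀ x, g2x x = (w1 * f1x x + w2 * f2x x) -
        γ * w1' * Real.sqrt (w1 * w2 / (w1' * (1 - w1'))) * (f1x x - f2x x))
    (hg1y : ∀ y, g1y y = (w1 * f1y y + w2 * f2y y) +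
        ((1 - w1') / γ) * Real.sqrt (w1 * w2 / (w1' * (1 - w1'))) * (f1y y - f2y y))
    (hg2y : ∀ y, g2y y = (w1 * f1y y + w2 * f2y y) -
        (w1' / γ) * Real.sqrt (w1 * w2 / (w1' * (1 - w1'))) * (f1y y - f2y y)) :
    -- (γ, w'₁) = (1, w₁) recovers the original instance
    ((γ = 1 ∧ w1' = w1) →
        (∀ x, g1x x = f1x x) ∧ (∀ x, g2x x = f2x x) ∧
        (∀ y, g1y y = f1y y) ∧ (∀ y, g2y y = f2y y)) ∧
    -- any other parameter value gives a genuinely different family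
    (¬ (γ = 1 ∧ w1' = w1) →
        ¬ ((w1' = w1 ∧ g1x =ᵐ[μ] f1x ∧ g2x =ᵐ[μ] f2x ∧
              g1y =ᵐ[ν] f1y ∧ g2y =ᵐ[ν] f2y) ∨
           (w1' = w2 ∧ g1x =ᵐ[μ] f2x ∧ g2x =ᵐ[μ] f1x ∧
              g1y =ᵐ[ν] f2y ∧ g2y =ᵐ[ν] f1y))) := by

  have hw2eq : w2 = 1 - w1 := by linarith
  have hw1lt : w1 < 1 := by linarith
  have hsw1 : Real.sqrt (w1 * w2 / (w1 * (1 - w1))) = 1 := by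
    rw [hw2eq, div_self (ne_of_gt (by nlinarith)), Real.sqrt_one]
  have hsw2 : Real.sqrt (w1 * w2 / (w2 * (1 - w2))) = 1 := by
    have h12 : 1 - w2 = w1 := by linarith
    rw [h12, mul_comm w2 w1, div_self (ne_of_gt (by nlinarith)), Real.sqrt_one]
  constructor
  · rintro ⟨rfl, rfl⟩
    refine ⟨fun x => ?_, fun x => ?_, fun y => ?_, fun y => ?_⟩
    · rw [hg1x, hsw1, hw2eq]; ring
    · rw [hg2x, hsw1, hw2eq]; ring
    · rw [hg1y, hsw1, hw2eq]; ring
    · rw [hg2y, hsw1, hw2eq]; ring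
  · intro hne
    rintro (⟨hww, hx1, -⟩ | ⟨hww, hx1, -⟩)
    · have hγ1 : γ ≠ 1 := fun h => hne ⟨h, hww⟩
      apply hΔx
      filter_upwards [hx1] with x hx
      rw [hg1x, hww, hsw1, hw2eq] at hx
      have h0 : ((γ - 1) * (1 - w1)) * (f1x x - f2x x) = 0 := by linear_combination hx
      have hc : (γ - 1) * (1 - w1) ≠ 0 :=
        mul_ne_zero (sub_ne_zero.mpr hγ1) (by linarith)
      have := (mul_eq_zero.mp h0).resolve_left hc
      linarith
    · apply hΔx
      filter_upwards [hx1] with x hx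
      rw [hg1x, hww, hsw2, hw2eq] at hx
      have h0 : ((γ + 1) * w1) * (f1x x - f2x x) = 0 := by linear_combination hx
      have hc : (γ + 1) * w1 ≠ 0 := by positivity
      have := (mul_eq_zero.mp h0).resolve_left hc
      linarith
end

section
/- (Nonnegativity constraints in the two-component case.) With μ^(i)_t = esssup[ w_i f^(i)_t / (w_1 f^(1)_t + w_2 f^(2)_t) ] for i ∈ {1,2}, t ∈ {x,y}, the nonnegativity of all four functions g^(i)_x, g^(i)_y in the two-parameter family is equivalent to the four inequalities: (1/γ)√(w'_1/w'_2) ≥ (μ^(2)_x − w_2)/√(w_1 w_2), (1/γ)√(w'_2/w'_1) ≥ (μ^(1)_x − w_1)/√(w_1 w_2), γ√(w'_1/w'_2) ≥ (μ^(2)_y − w_2)/√(w_1 w_2), γ√(w'_2/w'_1) ≥ (μ^(1)_y − w_1)/√(w_1 w_2). -/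
/-!
Write `P = w₁ f₁ + w₂ f₂`. Where `P > 0`, the identity
`c ((w₂ + w₁ w₂ / c) P - w₂ f₂) = w₁ w₂ (P + c (f₁ - f₂))`, valid because `w₁ + w₂ = 1`,
turns `P + c (f₁ - f₂) ≥ 0` into `w₂ f₂ / P ≤ w₂ + w₁ w₂ / c`; where `P = 0` both densities
vanish and there is nothing to check. The mixture measure `P • μ` neglects exactly `{P = 0}`,
so a.e. nonnegativity of `g` is the bound `esssup (w₂ f₂ / P) ≤ w₂ + w₁ w₂ / c`. For the four
members of the family, `w₁ w₂ / c` is `√(w₁ w₂)` times the stated right-hand side.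
-/

open MeasureTheory Filter

theorem essSup_le_iff_ae_le_of_nonneg {α : Type*} [MeasurableSpace α] {ρ : Measure α}
    {f : α → ℝ} {K : ℝ} (hf : 0 ≤ f) (hf_bdd : BddAbove (Set.range f)) (hK : 0 ≤ K) :
    essSup f ρ ≤ K ↔ ∀ᵐ x ∂ρ, f x ≤ K := by
  rcases eq_zero_or_neZero ρ with rfl | hρ
  · -- over the zero measure, `essSup f 0 = sInf univ`, which is `0` in `ℝ`
    simpa [essSup, limsup, limsSup] using hK
  refine ⟨fun h => ?_, fun h => essSup_le_of_ae_le K h (isCoboundedUnder_le_of_le _ hf)⟩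
  filter_upwards [ae_le_essSup hf_bdd.isBoundedUnder_of_range] with x hx
  exact hx.trans h

theorem mixture_add_nonneg_iff {w1 w2 a b c : ℝ} (hw1 : 0 < w1) (hw2 : 0 < w2)
    (hw : w1 + w2 = 1) (hc : 0 < c) (ha : 0 ≤ a) (hb : 0 ≤ b) :
    0 ≤ (w1 * a + w2 * b) + c * (a - b) ↔
      (0 < w1 * a + w2 * b → w2 * b / (w1 * a + w2 * b) ≤ w2 + w1 * w2 / c) := by
  rcases (add_nonneg (mul_nonneg hw1.le ha) (mul_nonneg hw2.le hb)).eq_or_lt with hP0 | hP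
  · obtain ⟨rfl, rfl⟩ : a = 0 ∧ b = 0 := by
      constructor <;> nlinarith [mul_nonneg hw1.le ha, mul_nonneg hw2.le hb]
    simp
  have key : c * ((w2 + w1 * w2 / c) * (w1 * a + w2 * b) - w2 * b) =
      w1 * w2 * ((w1 * a + w2 * b) + c * (a - b)) := by
    field_simp
    linear_combination (c * b) * hw
  rw [← mul_nonneg_iff_of_pos_left (mul_pos hw1 hw2), ← key, mul_nonneg_iff_of_pos_left hc,
    sub_nonneg, ← div_le_iff₀ hP]
  exact (imp_iff_right hP).symm

theorem div_sqrt_le_iff {S w A u v r c : ℝ} (hA : 0 < A) (hu : 0 < u) (hv : 0 < v)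
    (hc : r * c = v * Real.sqrt (A / (u * v))) :
    (S - w) / Real.sqrt A ≤ r * Real.sqrt (u / v) ↔ S ≤ w + A / c := by
  have hsA : 0 < Real.sqrt A := Real.sqrt_pos.mpr hA
  have hc0 : c ≠ 0 := by
    rintro rfl
    have : 0 < Real.sqrt (A / (u * v)) := Real.sqrt_pos.mpr (by positivity)
    nlinarith
  have : Real.sqrt A * (r * Real.sqrt (u / v)) = A / c := by
    rw [Real.sqrt_div hA.le, Real.sqrt_mul hu.le] at hc
    rw [eq_div_iff hc0, Real.sqrt_div hu.le]
    have hsu : 0 < Real.sqrt u := Real.sqrt_pos.mpr hu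
    have hsv : 0 < Real.sqrt v := Real.sqrt_pos.mpr hv
    calc Real.sqrt A * (r * (Real.sqrt u / Real.sqrt v)) * c
        = Real.sqrt A * (Real.sqrt u / Real.sqrt v) * (r * c) := by ring
      _ = Real.sqrt A ^ 2 * v / Real.sqrt v ^ 2 := by rw [hc]; field_simp
      _ = A := by rw [Real.sq_sqrt hA.le, Real.sq_sqrt hv.le]; field_simp
  rw [div_le_iff₀ hsA, sub_le_iff_le_add', mul_comm _ (Real.sqrt A), this]

theorem ae_mixture_add_nonneg_iff_essSup_le {α : Type*} [MeasurableSpace α] (μ : Measure α)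
    {f1 f2 : α → ℝ} (hf1 : Measurable f1) (hf2 : Measurable f2)
    (hf1_nonneg : ∀ x, 0 ≤ f1 x) (hf2_nonneg : ∀ x, 0 ≤ f2 x)
    {w1 w2 c : ℝ} (hw1 : 0 < w1) (hw2 : 0 < w2) (hw : w1 + w2 = 1) (hc : 0 < c) :
    (0 ≤ᵐ[μ] fun x => (w1 * f1 x + w2 * f2 x) + c * (f1 x - f2 x)) ↔
      essSup (fun x => w2 * f2 x / (w1 * f1 x + w2 * f2 x))
        (μ.withDensity fun x => ENNReal.ofReal (w1 * f1 x + w2 * f2 x)) ≤ w2 + w1 * w2 / c := by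
  have hP : Measurable fun x => w1 * f1 x + w2 * f2 x :=
    (hf1.const_mul w1).add (hf2.const_mul w2)
  have hw1f1 x : 0 ≤ w1 * f1 x := mul_nonneg hw1.le (hf1_nonneg x)
  have hw2f2 x : 0 ≤ w2 * f2 x := mul_nonneg hw2.le (hf2_nonneg x)
  have hratio_nonneg : 0 ≤ fun x => w2 * f2 x / (w1 * f1 x + w2 * f2 x) := fun x =>
    div_nonneg (hw2f2 x) (add_nonneg (hw1f1 x) (hw2f2 x))
  have hratio_le_one : BddAbove (Set.range fun x => w2 * f2 x / (w1 * f1 x + w2 * f2 x)) :=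
    ⟨1, Set.forall_mem_range.2 fun x =>
      div_le_one_of_le₀ (le_add_of_nonneg_left (hw1f1 x)) (add_nonneg (hw1f1 x) (hw2f2 x))⟩
  rw [essSup_le_iff_ae_le_of_nonneg hratio_nonneg hratio_le_one (by positivity),
    ae_withDensity_iff hP.ennreal_ofReal]
  refine eventually_congr (Eventually.of_forall fun x => ?_)
  rw [Pi.zero_apply, mixture_add_nonneg_iff hw1 hw2 hw hc (hf1_nonneg x) (hf2_nonneg x),
    ne_eq, ENNReal.ofReal_eq_zero, not_le]

theorem ae_mixture_sub_nonneg_iff_essSup_le {α : Type*} [MeasurableSpace α] (μ : Measure α)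
    {f1 f2 : α → ℝ} (hf1 : Measurable f1) (hf2 : Measurable f2)
    (hf1_nonneg : ∀ x, 0 ≤ f1 x) (hf2_nonneg : ∀ x, 0 ≤ f2 x)
    {w1 w2 c : ℝ} (hw1 : 0 < w1) (hw2 : 0 < w2) (hw : w1 + w2 = 1) (hc : 0 < c) :
    (0 ≤ᵐ[μ] fun x => (w1 * f1 x + w2 * f2 x) - c * (f1 x - f2 x)) ↔
      essSup (fun x => w1 * f1 x / (w1 * f1 x + w2 * f2 x))
        (μ.withDensity fun x => ENNReal.ofReal (w1 * f1 x + w2 * f2 x)) ≤ w1 + w1 * w2 / c := by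
  have hflip x : w1 * f1 x + w2 * f2 x - c * (f1 x - f2 x) =
      w2 * f2 x + w1 * f1 x + c * (f2 x - f1 x) := by ring
  have hswap x : w1 * f1 x + w2 * f2 x = w2 * f2 x + w1 * f1 x := add_comm _ _
  simp_rw [hflip, hswap, mul_comm w1 w2]
  exact ae_mixture_add_nonneg_iff_essSup_le μ hf2 hf1 hf2_nonneg hf1_nonneg hw2 hw1
    (by rwa [add_comm]) hc

theorem statement_17_general {Xt Yt : Type*} [MeasurableSpace Xt] [MeasurableSpace Yt]
    (μ : Measure Xt) (ν : Measure Yt)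
    (w1 w2 : ℝ) (hw1 : 0 < w1) (hw2 : 0 < w2) (hw : w1 + w2 = 1)
    (f1x f2x : Xt → ℝ) (f1y f2y : Yt → ℝ)
    (hf1x_meas : Measurable f1x) (hf2x_meas : Measurable f2x)
    (hf1y_meas : Measurable f1y) (hf2y_meas : Measurable f2y)
    (hf1x_nonneg : ∀ x, 0 ≤ f1x x) (hf2x_nonneg : ∀ x, 0 ≤ f2x x)
    (hf1y_nonneg : ∀ y, 0 ≤ f1y y) (hf2y_nonneg : ∀ y, 0 ≤ f2y y)
    (γ w1' : ℝ) (hγ : 0 < γ) (hw1' : 0 < w1') (hw1'lt : w1' < 1) :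
    ((0 ≤ᵐ[μ] fun x => (w1 * f1x x + w2 * f2x x) +
          γ * (1 - w1') * Real.sqrt (w1 * w2 / (w1' * (1 - w1'))) * (f1x x - f2x x)) ∧
     (0 ≤ᵐ[μ] fun x => (w1 * f1x x + w2 * f2x x) -
          γ * w1' * Real.sqrt (w1 * w2 / (w1' * (1 - w1'))) * (f1x x - f2x x)) ∧
     (0 ≤ᵐ[ν] fun y => (w1 * f1y y + w2 * f2y y) +
          ((1 - w1') / γ) * Real.sqrt (w1 * w2 / (w1' * (1 - w1'))) * (f1y y - f2y y)) ∧
     (0 ≤ᵐ[ν] fun y => (w1 * f1y y + w2 * f2y y) -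
          (w1' / γ) * Real.sqrt (w1 * w2 / (w1' * (1 - w1'))) * (f1y y - f2y y)))
    ↔
    (((essSup (fun x => w2 * f2x x / (w1 * f1x x + w2 * f2x x))
          (μ.withDensity (fun x => ENNReal.ofReal (w1 * f1x x + w2 * f2x x))) - w2) /
        Real.sqrt (w1 * w2) ≤ (1 / γ) * Real.sqrt (w1' / (1 - w1'))) ∧
     ((essSup (fun x => w1 * f1x x / (w1 * f1x x + w2 * f2x x))
          (μ.withDensity (fun x => ENNReal.ofReal (w1 * f1x x + w2 * f2x x))) - w1) /
        Real.sqrt (w1 * w2) ≤ (1 / γ) * Real.sqrt ((1 - w1') / w1')) ∧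
     ((essSup (fun y => w2 * f2y y / (w1 * f1y y + w2 * f2y y))
          (ν.withDensity (fun y => ENNReal.ofReal (w1 * f1y y + w2 * f2y y))) - w2) /
        Real.sqrt (w1 * w2) ≤ γ * Real.sqrt (w1' / (1 - w1'))) ∧
     ((essSup (fun y => w1 * f1y y / (w1 * f1y y + w2 * f2y y))
          (ν.withDensity (fun y => ENNReal.ofReal (w1 * f1y y + w2 * f2y y))) - w1) /
        Real.sqrt (w1 * w2) ≤ γ * Real.sqrt ((1 - w1') / w1'))) := by
  have hv : 0 < 1 - w1' := sub_pos.mpr hw1'lt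
  have hA : 0 < w1 * w2 := mul_pos hw1 hw2
  refine and_congr ?_ (and_congr ?_ (and_congr ?_ ?_))
  · refine (ae_mixture_add_nonneg_iff_essSup_le μ hf1x_meas hf2x_meas hf1x_nonneg hf2x_nonneg
      hw1 hw2 hw (by positivity)).trans (div_sqrt_le_iff hA hw1' hv ?_).symm
    field_simp
  · refine (ae_mixture_sub_nonneg_iff_essSup_le μ hf1x_meas hf2x_meas hf1x_nonneg hf2x_nonneg
      hw1 hw2 hw (by positivity)).trans (div_sqrt_le_iff hA hv hw1' ?_).symm
    rw [mul_comm (1 - w1')]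
    field_simp
  · refine (ae_mixture_add_nonneg_iff_essSup_le ν hf1y_meas hf2y_meas hf1y_nonneg hf2y_nonneg
      hw1 hw2 hw (by positivity)).trans (div_sqrt_le_iff hA hw1' hv ?_).symm
    field_simp
  · refine (ae_mixture_sub_nonneg_iff_essSup_le ν hf1y_meas hf2y_meas hf1y_nonneg hf2y_nonneg
      hw1 hw2 hw (by positivity)).trans (div_sqrt_le_iff hA hv hw1' ?_).symm
    rw [mul_comm (1 - w1')]
    field_simp

/-- Nonnegativity constraints in the two-component case (eq. A.3): with
μ⁽ⁱ⁾_t = esssup[wᵢ f⁽ⁱ⁾_t / P_t] (w.r.t. the mixture marginal measure), the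
a.e. nonnegativity of the four functions g of the two-parameter family is
equivalent to the four stated inequalities. -/
theorem statement_17 {Xt Yt : Type*} [MeasurableSpace Xt] [MeasurableSpace Yt]
    (μ : Measure Xt) (ν : Measure Yt) [SigmaFinite μ] [SigmaFinite ν]
    (w1 w2 : ℝ) (hw1 : 0 < w1) (hw2 : 0 < w2) (hw : w1 + w2 = 1)
    (f1x f2x : Xt → ℝ) (f1y f2y : Yt → ℝ)
    (hf1x_meas : Measurable f1x) (hf2x_meas : Measurable f2x)
    (hf1y_meas : Measurable f1y) (hf2y_meas : Measurable f2y)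
    (hf1x_nonneg : ∀ x, 0 ≤ f1x x) (hf2x_nonneg : ∀ x, 0 ≤ f2x x)
    (hf1y_nonneg : ∀ y, 0 ≤ f1y y) (hf2y_nonneg : ∀ y, 0 ≤ f2y y)
    (hf1x_int : Integrable f1x μ) (hf2x_int : Integrable f2x μ)
    (hf1y_int : Integrable f1y ν) (hf2y_int : Integrable f2y ν)
    (hf1x_one : ∫ x, f1x x ∂μ = 1) (hf2x_one : ∫ x, f2x x ∂μ = 1)
    (hf1y_one : ∫ y, f1y y ∂ν = 1) (hf2y_one : ∫ y, f2y y ∂ν = 1)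
    (hΔx : ¬ (f1x =ᵐ[μ] f2x)) (hΔy : ¬ (f1y =ᵐ[ν] f2y))
    (γ w1' : ℝ) (hγ : 0 < γ) (hw1' : 0 < w1') (hw1'lt : w1' < 1) :
    ((0 ≤ᵐ[μ] fun x => (w1 * f1x x + w2 * f2x x) +
          γ * (1 - w1') * Real.sqrt (w1 * w2 / (w1' * (1 - w1'))) * (f1x x - f2x x)) ∧
     (0 ≤ᵐ[μ] fun x => (w1 * f1x x + w2 * f2x x) -
          γ * w1' * Real.sqrt (w1 * w2 / (w1' * (1 - w1'))) * (f1x x - f2x x)) ∧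
     (0 ≤ᵐ[ν] fun y => (w1 * f1y y + w2 * f2y y) +
          ((1 - w1') / γ) * Real.sqrt (w1 * w2 / (w1' * (1 - w1'))) * (f1y y - f2y y)) ∧
     (0 ≤ᵐ[ν] fun y => (w1 * f1y y + w2 * f2y y) -
          (w1' / γ) * Real.sqrt (w1 * w2 / (w1' * (1 - w1'))) * (f1y y - f2y y)))
    ↔
    (((essSup (fun x => w2 * f2x x / (w1 * f1x x + w2 * f2x x))
          (μ.withDensity (fun x => ENNReal.ofReal (w1 * f1x x + w2 * f2x x))) - w2) /
        Real.sqrt (w1 * w2) ≤ (1 / γ) * Real.sqrt (w1' / (1 - w1'))) ∧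
     ((essSup (fun x => w1 * f1x x / (w1 * f1x x + w2 * f2x x))
          (μ.withDensity (fun x => ENNReal.ofReal (w1 * f1x x + w2 * f2x x))) - w1) /
        Real.sqrt (w1 * w2) ≤ (1 / γ) * Real.sqrt ((1 - w1') / w1')) ∧
     ((essSup (fun y => w2 * f2y y / (w1 * f1y y + w2 * f2y y))
          (ν.withDensity (fun y => ENNReal.ofReal (w1 * f1y y + w2 * f2y y))) - w2) /
        Real.sqrt (w1 * w2) ≤ γ * Real.sqrt (w1' / (1 - w1'))) ∧
     ((essSup (fun y => w1 * f1y y / (w1 * f1y y + w2 * f2y y))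
          (ν.withDensity (fun y => ENNReal.ofReal (w1 * f1y y + w2 * f2y y))) - w1) /
        Real.sqrt (w1 * w2) ≤ γ * Real.sqrt ((1 - w1') / w1'))) :=
  statement_17_general μ ν w1 w2 hw1 hw2 hw f1x f2x f1y f2y hf1x_meas hf2x_meas hf1y_meas hf2y_meas
    hf1x_nonneg hf2x_nonneg hf1y_nonneg hf2y_nonneg γ w1' hγ hw1' hw1'lt
end

section
/- (Identifiability criterion for C = 2.) Multiplying the four nonnegativity inequalities pairwise yields the constraint (μ^(2)_x − w_2)(μ^(2)_y − w_2)/(w_1 w_2) ≤ w'_1/w'_2 ≤ w_1 w_2 / ((μ^(1)_x − w_1)(μ^(1)_y − w_1)), and the lower and upper bounds both equal w_1/w_2 if and only if μ^(1)_x = μ^(2)_x = μ^(1)_y = μ^(2)_y = 1. Hence the two-component bivariate CIMM instance is identifiable up to permutation if and only if all four essential suprema μ^(i)_t equal 1. -/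
open MeasureTheory Filter

/-!
If all four `μ⁽ⁱ⁾_t` equal `1`, take an observationally equivalent instance. Integrating out
one coordinate gives the marginal identities, and subtracting the product of the marginals
leaves the rank-one identity
`w₁'w₂' (g₁ₓ - g₂ₓ) ⊗ (g₁ᵧ - g₂ᵧ) = w₁w₂ (f₁ₓ - f₂ₓ) ⊗ (f₁ᵧ - f₂ᵧ)`,
so `g₁ₜ - g₂ₜ = pₜ (f₁ₜ - f₂ₜ)` with `w₁'w₂' pₓ pᵧ = w₁w₂`. Then each `gᵢₜ` is an explicit
combination of `f₁ₜ, f₂ₜ`, and since `μ⁽ⁱ⁾_t = 1` says exactly that `fᵢₜ` is not a.e. bounded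
by a multiple of the other component, nonnegativity of `gᵢₜ` forces both coefficients to be
nonnegative. These bounds leave only the identity and the swap of the components.
Conversely, if some `μ⁽ⁱ⁾_t < 1`, say `f₁ₓ ≤ C f₂ₓ`, a little weight can be moved from the
second component to the first without losing nonnegativity.
-/

section Algebra

theorem div_sqrt_mul_div_sqrt_le {a c k r γ : ℝ} (hc : 0 ≤ c) (hk : 0 < k)
    (hr : 0 ≤ r) (hγ : 0 < γ) (ha' : a / √k ≤ 1 / γ * √r)
    (hc' : c / √k ≤ γ * √r) :
    a * c / k ≤ r :=
  calc a * c / k = a / √k * (c / √k) := by rw [div_mul_div_comm, Real.mul_self_sqrt hk.le]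
    _ ≤ 1 / γ * √r * (γ * √r) := mul_le_mul ha' hc' (by positivity) (by positivity)
    _ = r := by field_simp; exact Real.sq_sqrt hr

theorem odds_sandwich {w1 w2 μ1x μ2x μ1y μ2y γ w1' : ℝ} (hw1 : 0 < w1) (hw2 : 0 < w2)
    (h1x : w1 < μ1x) (h1y : w1 < μ1y) (h2y : w2 < μ2y)
    (hγ : 0 < γ) (hw1' : 0 < w1') (hw1'1 : w1' < 1)
    (h₁ : (μ2x - w2) / √(w1 * w2) ≤ (1 / γ) * √(w1' / (1 - w1')))
    (h₂ : (μ1x - w1) / √(w1 * w2) ≤ (1 / γ) * √((1 - w1') / w1'))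
    (h₃ : (μ2y - w2) / √(w1 * w2) ≤ γ * √(w1' / (1 - w1')))
    (h₄ : (μ1y - w1) / √(w1 * w2) ≤ γ * √((1 - w1') / w1')) :
    (μ2x - w2) * (μ2y - w2) / (w1 * w2) ≤ w1' / (1 - w1') ∧
      w1' / (1 - w1') ≤ w1 * w2 / ((μ1x - w1) * (μ1y - w1)) := by
  have hw2' : 0 < 1 - w1' := by linarith
  refine ⟨div_sqrt_mul_div_sqrt_le (by linarith) (by positivity) (by positivity)
    hγ h₁ h₃, ?_⟩
  have h := div_sqrt_mul_div_sqrt_le (by linarith) (by positivity) (by positivity)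
    hγ h₂ h₄
  have hpos : 0 < (μ1x - w1) * (μ1y - w1) / (w1 * w2) := by
    have := sub_pos.2 h1x; have := sub_pos.2 h1y; positivity
  simpa only [inv_div] using inv_anti₀ hpos h

theorem odds_bounds_eq_iff {w1 w2 μ1x μ2x μ1y μ2y : ℝ} (hw1 : 0 < w1) (hw2 : 0 < w2)
    (hw : w1 + w2 = 1) (h1x : w1 < μ1x ∧ μ1x ≤ 1) (h2x : w2 < μ2x ∧ μ2x ≤ 1)
    (h1y : w1 < μ1y ∧ μ1y ≤ 1) (h2y : w2 < μ2y ∧ μ2y ≤ 1) :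
    ((μ2x - w2) * (μ2y - w2) / (w1 * w2) = w1 / w2 ∧
        w1 * w2 / ((μ1x - w1) * (μ1y - w1)) = w1 / w2) ↔
      (μ1x = 1 ∧ μ2x = 1 ∧ μ1y = 1 ∧ μ2y = 1) := by
  have lower : (μ2x - w2) * (μ2y - w2) / (w1 * w2) = w1 / w2 ↔ μ2x = 1 ∧ μ2y = 1 :=
    calc _ ↔ (μ2x - w2) * (μ2y - w2) = w1 * w1 := by
          rw [div_eq_div_iff (by positivity) hw2.ne']
          exact ⟨fun h => mul_right_cancel₀ hw2.ne' (by linear_combination h),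
            fun h => by linear_combination w2 * h⟩
      _ ↔ μ2x - w2 = w1 ∧ μ2y - w2 = w1 :=
          mul_eq_mul_iff_eq_and_eq_of_pos (by linarith) (by linarith) (by linarith) hw1
      _ ↔ μ2x = 1 ∧ μ2y = 1 := by
          constructor <;> rintro ⟨h, h'⟩ <;> constructor <;> linarith
  have upper : w1 * w2 / ((μ1x - w1) * (μ1y - w1)) = w1 / w2 ↔ μ1x = 1 ∧ μ1y = 1 :=
    calc _ ↔ (μ1x - w1) * (μ1y - w1) = w2 * w2 := by
          have := sub_pos.2 h1x.1; have := sub_pos.2 h1y.1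
          rw [div_eq_div_iff (by positivity) hw2.ne']
          exact ⟨fun h => mul_left_cancel₀ hw1.ne' (by linear_combination -h),
            fun h => by linear_combination -w1 * h⟩
      _ ↔ μ1x - w1 = w2 ∧ μ1y - w1 = w2 :=
          mul_eq_mul_iff_eq_and_eq_of_pos (by linarith) (by linarith) (by linarith) hw2
      _ ↔ μ1x = 1 ∧ μ1y = 1 := by
          constructor <;> rintro ⟨h, h'⟩ <;> constructor <;> linarith
  rw [lower, upper]
  tauto

theorem mixture_eq_marginal_mul_add_cov {w1 w2 : ℝ} (hw : w1 + w2 = 1) (a b c d : ℝ) :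
    w1 * a * b + w2 * c * d =
      (w1 * a + w2 * c) * (w1 * b + w2 * d) + w1 * w2 * ((a - c) * (b - d)) := by
  linear_combination (-(w1 * a * b) - w2 * c * d) * hw

theorem weights_eq_of_coeff_bounds_of_pos {w1 w2 w1' w2' p q : ℝ} (hw1 : 0 < w1) (hw2 : 0 < w2)
    (hw : w1 + w2 = 1) (hw1' : 0 < w1') (hw2' : 0 < w2') (hw' : w1' + w2' = 1)
    (hpq : w1' * w2' * (p * q) = w1 * w2) (hp0 : 0 < p)
    (hp : w1' * p ≤ w1 ∧ w2' * p ≤ w2) (hq : w1' * q ≤ w1 ∧ w2' * q ≤ w2) :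
    w1' = w1 ∧ p = 1 ∧ q = 1 := by
  have hq0 : 0 < q := by
    have h := hpq.trans_gt (mul_pos hw1 hw2)
    rw [← mul_assoc] at h
    exact pos_of_mul_pos_right h (by positivity)
  obtain ⟨h1p, h2q⟩ := (mul_eq_mul_iff_eq_and_eq_of_pos hp.1 hq.2 (by positivity) hw2).1
    (by linear_combination hpq)
  obtain ⟨h2p, -⟩ := (mul_eq_mul_iff_eq_and_eq_of_pos hp.2 hq.1 (by positivity) hw1).1
    (by linear_combination hpq)
  have hp1 : p = 1 := by linear_combination h1p + h2p + hw - p * hw'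
  have hq1 : q = 1 := mul_left_cancel₀ hw2'.ne' (by rw [h2q, ← h2p, hp1])
  exact ⟨by simpa [hp1] using h1p, hp1, hq1⟩

/-- `hp`, `hq` say that the coefficients in `ae_eq_of_marginal_of_sub` are nonnegative. -/
theorem weights_eq_of_coeff_bounds {w1 w2 w1' w2' p q : ℝ} (hw1 : 0 < w1) (hw2 : 0 < w2)
    (hw : w1 + w2 = 1) (hw1' : 0 < w1') (hw2' : 0 < w2') (hw' : w1' + w2' = 1)
    (hpq : w1' * w2' * (p * q) = w1 * w2)
    (hp : w1' * p ≤ w1 ∧ w2' * p ≤ w2 ∧ -w1 ≤ w2' * p ∧ -w2 ≤ w1' * p)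
    (hq : w1' * q ≤ w1 ∧ w2' * q ≤ w2 ∧ -w1 ≤ w2' * q ∧ -w2 ≤ w1' * q) :
    (w1' = w1 ∧ p = 1 ∧ q = 1) ∨ (w1' = w2 ∧ p = -1 ∧ q = -1) := by
  rcases lt_or_gt_of_ne (left_ne_zero_of_mul (right_ne_zero_of_mul
    (hpq.trans_ne (by positivity)))) with hp0 | hp0
  · right
    obtain ⟨h1, h2, h3⟩ := weights_eq_of_coeff_bounds_of_pos hw2 hw1 (by linarith) hw1' hw2'
      hw' (p := -p) (q := -q) (by linear_combination hpq) (by linarith)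
      ⟨by linarith, by linarith⟩ ⟨by linarith, by linarith⟩
    exact ⟨h1, by linarith, by linarith⟩
  · exact Or.inl (weights_eq_of_coeff_bounds_of_pos hw1 hw2 hw hw1' hw2' hw' hpq hp0
      ⟨hp.1, hp.2.1⟩ ⟨hq.1, hq.2.1⟩)

end Algebra

section Development

variable {X Y : Type*} [MeasurableSpace X] [MeasurableSpace Y]

/-- The paper's `μ⁽ⁱ⁾_t`, for the component `F` with weight `a` against `G` with weight `b`. -/
noncomputable def posteriorSup (μ : Measure X) (a b : ℝ) (F G : X → ℝ) : ℝ :=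
  essSup (fun x => a * F x / (a * F x + b * G x))
    (μ.withDensity fun x => ENNReal.ofReal (a * F x + b * G x))

def AEDominatedBy (μ : Measure X) (F G : X → ℝ) : Prop :=
  ∃ C : ℝ, ∀ᵐ x ∂μ, F x ≤ C * G x

section Posterior

variable {μ : Measure X} {a b : ℝ} {F G : X → ℝ}

theorem essSup_posterior_comm :
    essSup (fun x => b * G x / (a * F x + b * G x))
      (μ.withDensity fun x => ENNReal.ofReal (a * F x + b * G x)) = posteriorSup μ b a G F := by
  simp only [posteriorSup, add_comm]

theorem ae_withDensity_ofReal_iff {f : X → ℝ} (hf : Measurable f) {P : X → Prop} :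
    (∀ᵐ x ∂μ.withDensity fun x => ENNReal.ofReal (f x), P x) ↔
      ∀ᵐ x ∂μ, 0 < f x → P x := by
  rw [ae_withDensity_iff hf.ennreal_ofReal]
  simp only [ne_eq, ENNReal.ofReal_eq_zero, not_le]

theorem aeDominatedBy_of_posteriorSup_lt_one (ha : 0 < a) (hb : 0 < b) (hF : ∀ x, 0 ≤ F x)
    (hG : ∀ x, 0 ≤ G x) (hFm : Measurable F) (hGm : Measurable G)
    (h : posteriorSup μ a b F G < 1) : AEDominatedBy μ F G := by
  set r := posteriorSup μ a b F G
  have hle_one x : a * F x / (a * F x + b * G x) ≤ 1 := by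
    have := hF x; have := hG x; exact div_le_one_of_le₀ (by nlinarith) (by positivity)
  have hr : ∀ᵐ x ∂μ, 0 < a * F x + b * G x → a * F x / (a * F x + b * G x) ≤ r :=
    (ae_withDensity_ofReal_iff (by fun_prop)).1 (ae_le_essSup (isBoundedUnder_of ⟨1, hle_one⟩))
  refine ⟨r * b / (a * (1 - r)), hr.mono fun x hx => ?_⟩
  rw [div_mul_eq_mul_div, le_div_iff₀ (mul_pos ha (sub_pos.2 h))]
  rcases (add_nonneg (mul_nonneg ha.le (hF x)) (mul_nonneg hb.le (hG x))).lt_or_eq with hs | hs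
  · have := (div_le_iff₀ hs).1 (hx hs)
    nlinarith
  · have hF0 : F x = 0 := by nlinarith [hF x, hG x]
    have hG0 : G x = 0 := by nlinarith [hF x, hG x]
    simp [hF0, hG0]

theorem posteriorSup_lt_one_of_aeDominatedBy (ha : 0 < a) (hb : 0 < b) (hF : ∀ x, 0 ≤ F x)
    (hG : ∀ x, 0 ≤ G x) (hFm : Measurable F) (hGm : Measurable G) (h : AEDominatedBy μ F G) :
    posteriorSup μ a b F G < 1 := by
  obtain ⟨C, hC⟩ := h
  set ρ := μ.withDensity fun x => ENNReal.ofReal (a * F x + b * G x)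
  have hbound : ∀ᵐ x ∂ρ, a * F x / (a * F x + b * G x) ≤ a * |C| / (a * |C| + b) := by
    refine (ae_withDensity_ofReal_iff (by fun_prop)).2 (hC.mono fun x hx hs => ?_)
    rw [div_le_div_iff₀ hs (by positivity)]
    have hx' : F x ≤ |C| * G x := hx.trans (mul_le_mul_of_nonneg_right (le_abs_self C) (hG x))
    nlinarith [mul_le_mul_of_nonneg_left hx' (mul_pos ha hb).le]
  calc posteriorSup μ a b F G ≤ a * |C| / (a * |C| + b) := by
        rcases eq_zero_or_neZero ρ with h0 | h0
        · -- for the zero measure, `essSup` is the junk value `sInf univ = 0`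
          simp only [posteriorSup, ρ] at h0 ⊢
          rw [h0]
          simp [essSup, limsup, limsSup]
          positivity
        · refine essSup_le_of_ae_le _ hbound
            (isBoundedUnder_of ⟨0, fun x => ?_⟩).isCoboundedUnder_le
          have := hF x; have := hG x; positivity
    _ < 1 := (div_lt_one (by positivity)).2 (by linarith)

theorem posteriorSup_lt_one_iff (ha : 0 < a) (hb : 0 < b) (hF : ∀ x, 0 ≤ F x)
    (hG : ∀ x, 0 ≤ G x) (hFm : Measurable F) (hGm : Measurable G) :
    posteriorSup μ a b F G < 1 ↔ AEDominatedBy μ F G :=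
  ⟨aeDominatedBy_of_posteriorSup_lt_one ha hb hF hG hFm hGm,
    posteriorSup_lt_one_of_aeDominatedBy ha hb hF hG hFm hGm⟩

theorem posteriorSup_eq_one_iff (ha : 0 < a) (hb : 0 < b) (hF : ∀ x, 0 ≤ F x)
    (hG : ∀ x, 0 ≤ G x) (hFm : Measurable F) (hGm : Measurable G)
    (h : posteriorSup μ a b F G ≤ 1) :
    posteriorSup μ a b F G = 1 ↔ ¬ AEDominatedBy μ F G := by
  rw [← posteriorSup_lt_one_iff ha hb hF hG hFm hGm, h.lt_iff_ne, not_not]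

theorem nonneg_of_ae_nonneg_of_not_aeDominatedBy {α β : ℝ}
    (h : ∀ᵐ x ∂μ, 0 ≤ α * F x + β * G x) (hF : ¬ AEDominatedBy μ F G) : 0 ≤ α := by
  by_contra! hα
  refine hF ⟨β / -α, h.mono fun x hx => ?_⟩
  rw [div_mul_eq_mul_div, le_div_iff₀ (neg_pos.2 hα)]
  linarith

end Posterior

section Product

variable {μ : Measure X} {ν : Measure Y}

theorem ae_prod_swap [SFinite μ] [SFinite ν] {P : X × Y → Prop}
    (h : ∀ᵐ p ∂μ.prod ν, P p) :
    ∀ᵐ q ∂ν.prod μ, P q.swap :=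
  Measure.measurePreserving_swap.quasiMeasurePreserving.ae h

theorem frequently_ae_of_frequently_ae_prod_fst {P : X → Prop}
    (h : ∃ᵐ p ∂μ.prod ν, P p.1) : ∃ᵐ x ∂μ, P x :=
  fun hx => h (Measure.quasiMeasurePreserving_fst.ae hx)

theorem frequently_ae_of_frequently_ae_prod_snd {P : Y → Prop}
    (h : ∃ᵐ p ∂μ.prod ν, P p.2) : ∃ᵐ y ∂ν, P y :=
  fun hy => h (Measure.quasiMeasurePreserving_snd.ae hy)

theorem frequently_ae_prod_mul_ne_zero [SFinite ν] {u : X → ℝ} {v : Y → ℝ}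
    (hu : ∃ᵐ x ∂μ, u x ≠ 0) (hv : ∃ᵐ y ∂ν, v y ≠ 0) :
    ∃ᵐ p ∂μ.prod ν, u p.1 * v p.2 ≠ 0 := by
  rw [frequently_ae_iff] at *
  refine fun h0 => mul_ne_zero hu hv ?_
  rw [← Measure.prod_prod]
  exact measure_mono_null (fun p hp => mul_ne_zero hp.1 hp.2) h0

theorem exists_ae_eq_const_mul_of_ae_prod [SFinite ν] {a b : X → ℝ} {v v' : Y → ℝ}
    (h : ∀ᵐ p ∂μ.prod ν, a p.1 * v p.2 = b p.1 * v' p.2) (ha : ∃ᵐ x ∂μ, a x ≠ 0) :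
    ∃ c, ∀ᵐ y ∂ν, v y = c * v' y := by
  obtain ⟨x₀, hx₀, hslice⟩ := (ha.and_eventually (Measure.ae_ae_of_ae_prod h)).exists
  refine ⟨b x₀ / a x₀, hslice.mono fun y hy => ?_⟩
  rw [div_mul_eq_mul_div, eq_div_iff hx₀]
  linear_combination hy

theorem exists_ae_eq_const_mul_of_ae_prod_mul [SFinite μ] [SFinite ν] {k k' : ℝ}
    {u u' : X → ℝ} {v v' : Y → ℝ}
    (h : ∀ᵐ p ∂μ.prod ν, k' * (u p.1 * v p.2) = k * (u' p.1 * v' p.2)) (hk : k ≠ 0)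
    (hu' : ∃ᵐ x ∂μ, u' x ≠ 0) (hv' : ∃ᵐ y ∂ν, v' y ≠ 0) :
    ∃ c d, k' * (c * d) = k ∧ (∀ᵐ x ∂μ, u x = c * u' x) ∧
      (∀ᵐ y ∂ν, v y = d * v' y) := by
  have hne' := frequently_ae_prod_mul_ne_zero hu' hv'
  have hne : ∃ᵐ p ∂μ.prod ν, k' * (u p.1 * v p.2) ≠ 0 :=
    (hne'.and_eventually h).mono fun p ⟨hp, he⟩ => he ▸ mul_ne_zero hk hp
  obtain ⟨c, hc⟩ := exists_ae_eq_const_mul_of_ae_prod (a := fun y => k' * v y)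
    (b := fun y => k * v' y) (v := u) (v' := u') ((ae_prod_swap h).mono fun q hq => by
      simp only [Prod.fst_swap, Prod.snd_swap] at hq; linear_combination hq)
    (frequently_ae_of_frequently_ae_prod_snd (hne.mono fun p hp h0 => hp (by
      rw [mul_left_comm, h0, mul_zero])))
  obtain ⟨d, hd⟩ := exists_ae_eq_const_mul_of_ae_prod (a := fun x => k' * u x)
    (b := fun x => k * u' x) (v := v) (v' := v')
    (h.mono fun p hp => by linear_combination hp)
    (frequently_ae_of_frequently_ae_prod_fst (hne.mono fun p hp h0 => hp (by
      rw [← mul_assoc, h0, zero_mul])))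
  refine ⟨c, d, ?_, hc, hd⟩
  obtain ⟨p, hp, he, hu, hv⟩ := (hne'.and_eventually (h.and
    ((Measure.quasiMeasurePreserving_fst.ae hc).and
      (Measure.quasiMeasurePreserving_snd.ae hd)))).exists
  rw [hu, hv] at he
  exact mul_right_cancel₀ hp (by linear_combination he)

theorem ae_marginal_eq [SFinite ν] {a₁ a₂ c₁ c₂ : X → ℝ} {b₁ b₂ d₁ d₂ : Y → ℝ}
    (h : ∀ᵐ p ∂μ.prod ν,
      a₁ p.1 * b₁ p.2 + a₂ p.1 * b₂ p.2 = c₁ p.1 * d₁ p.2 + c₂ p.1 * d₂ p.2)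
    (hb₁ : ∫ y, b₁ y ∂ν = 1) (hb₂ : ∫ y, b₂ y ∂ν = 1)
    (hd₁ : ∫ y, d₁ y ∂ν = 1) (hd₂ : ∫ y, d₂ y ∂ν = 1) :
    ∀ᵐ x ∂μ, a₁ x + a₂ x = c₁ x + c₂ x := by
  filter_upwards [Measure.ae_ae_of_ae_prod h] with x hx
  have hint := integral_congr_ae hx
  rwa [integral_add ((integrable_of_integral_eq_one hb₁).const_mul _)
      ((integrable_of_integral_eq_one hb₂).const_mul _),
    integral_add ((integrable_of_integral_eq_one hd₁).const_mul _)
      ((integrable_of_integral_eq_one hd₂).const_mul _),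
    integral_const_mul, integral_const_mul, integral_const_mul, integral_const_mul,
    hb₁, hb₂, hd₁, hd₂, mul_one, mul_one, mul_one, mul_one] at hint

end Product

section Coordinate

variable {μ : Measure X} {w1 w2 w1' w2' p : ℝ} {f1 f2 g1 g2 : X → ℝ}

theorem ae_eq_of_marginal_of_sub (hw' : w1' + w2' = 1)
    (hm : ∀ᵐ x ∂μ, w1' * g1 x + w2' * g2 x = w1 * f1 x + w2 * f2 x)
    (hd : ∀ᵐ x ∂μ, g1 x - g2 x = p * (f1 x - f2 x)) :
    (∀ᵐ x ∂μ, g1 x = (w1 + w2' * p) * f1 x + (w2 - w2' * p) * f2 x) ∧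
      (∀ᵐ x ∂μ, g2 x = (w1 - w1' * p) * f1 x + (w2 + w1' * p) * f2 x) :=
  ⟨(hm.and hd).mono fun x ⟨hm, hd⟩ => by linear_combination hm + w2' * hd - g1 x * hw',
    (hm.and hd).mono fun x ⟨hm, hd⟩ => by linear_combination hm - w1' * hd - g2 x * hw'⟩

theorem coeff_bounds_of_marginal_of_sub (hw' : w1' + w2' = 1)
    (hm : ∀ᵐ x ∂μ, w1' * g1 x + w2' * g2 x = w1 * f1 x + w2 * f2 x)
    (hd : ∀ᵐ x ∂μ, g1 x - g2 x = p * (f1 x - f2 x))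
    (hg1 : ∀ x, 0 ≤ g1 x) (hg2 : ∀ x, 0 ≤ g2 x)
    (h12 : ¬ AEDominatedBy μ f1 f2) (h21 : ¬ AEDominatedBy μ f2 f1) :
    w1' * p ≤ w1 ∧ w2' * p ≤ w2 ∧ -w1 ≤ w2' * p ∧ -w2 ≤ w1' * p := by
  obtain ⟨h1, h2⟩ := ae_eq_of_marginal_of_sub hw' hm hd
  have c1 := nonneg_of_ae_nonneg_of_not_aeDominatedBy
    (h1.mono fun x hx => hx ▸ hg1 x) h12
  have c2 := nonneg_of_ae_nonneg_of_not_aeDominatedBy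
    (h1.mono fun x hx => (add_comm _ _).trans_ge (hx ▸ hg1 x)) h21
  have c3 := nonneg_of_ae_nonneg_of_not_aeDominatedBy
    (h2.mono fun x hx => hx ▸ hg2 x) h12
  have c4 := nonneg_of_ae_nonneg_of_not_aeDominatedBy
    (h2.mono fun x hx => (add_comm _ _).trans_ge (hx ▸ hg2 x)) h21
  exact ⟨by linarith, by linarith, by linarith, by linarith⟩

theorem ae_eq_of_weight_eq (hw : w1 + w2 = 1) (hw' : w1' + w2' = 1)
    (hm : ∀ᵐ x ∂μ, w1' * g1 x + w2' * g2 x = w1 * f1 x + w2 * f2 x)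
    (hd : ∀ᵐ x ∂μ, g1 x - g2 x = p * (f1 x - f2 x)) (h1 : w1' = w1) (hp : p = 1) :
    g1 =ᵐ[μ] f1 ∧ g2 =ᵐ[μ] f2 := by
  obtain ⟨hg1, hg2⟩ := ae_eq_of_marginal_of_sub hw' hm hd
  have h2 : w2' = w2 := by linarith
  exact ⟨hg1.mono fun x hx => by rw [hx, h2, hp]; linear_combination f1 x * hw,
    hg2.mono fun x hx => by rw [hx, h1, hp]; linear_combination f2 x * hw⟩

theorem ae_eq_swap_of_weight_eq (hw : w1 + w2 = 1) (hw' : w1' + w2' = 1)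
    (hm : ∀ᵐ x ∂μ, w1' * g1 x + w2' * g2 x = w1 * f1 x + w2 * f2 x)
    (hd : ∀ᵐ x ∂μ, g1 x - g2 x = p * (f1 x - f2 x)) (h1 : w1' = w2) (hp : p = -1) :
    g1 =ᵐ[μ] f2 ∧ g2 =ᵐ[μ] f1 := by
  obtain ⟨hg1, hg2⟩ := ae_eq_of_marginal_of_sub hw' hm hd
  have h2 : w2' = w1 := by linarith
  exact ⟨hg1.mono fun x hx => by rw [hx, h2, hp]; linear_combination f2 x * hw,
    hg2.mono fun x hx => by rw [hx, h1, hp]; linear_combination f1 x * hw⟩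

end Coordinate

def IsIdentifiable (μ : Measure X) (ν : Measure Y) (w1 w2 : ℝ) (f1x f2x : X → ℝ)
    (f1y f2y : Y → ℝ) : Prop :=
  ∀ (w1' w2' : ℝ) (g1x g2x : X → ℝ) (g1y g2y : Y → ℝ),
    0 ≤ w1' → 0 ≤ w2' → w1' + w2' = 1 →
    Measurable g1x → Measurable g2x → Measurable g1y → Measurable g2y →
    (∀ x, 0 ≤ g1x x) → (∀ x, 0 ≤ g2x x) →
    (∀ y, 0 ≤ g1y y) → (∀ y, 0 ≤ g2y y) →
    (∫ x, g1x x ∂μ = 1) → (∫ x, g2x x ∂μ = 1) →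
    (∫ y, g1y y ∂ν = 1) → (∫ y, g2y y ∂ν = 1) →
    (∀ᵐ p ∂(μ.prod ν),
      w1' * g1x p.1 * g1y p.2 + w2' * g2x p.1 * g2y p.2
        = w1 * f1x p.1 * f1y p.2 + w2 * f2x p.1 * f2y p.2) →
    ((w1' = w1 ∧ w2' = w2 ∧ g1x =ᵐ[μ] f1x ∧ g2x =ᵐ[μ] f2x ∧
        g1y =ᵐ[ν] f1y ∧ g2y =ᵐ[ν] f2y) ∨
     (w1' = w2 ∧ w2' = w1 ∧ g1x =ᵐ[μ] f2x ∧ g2x =ᵐ[μ] f1x ∧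
        g1y =ᵐ[ν] f2y ∧ g2y =ᵐ[ν] f1y))

structure IsProbabilityDensity (μ : Measure X) (f : X → ℝ) : Prop where
  measurable : Measurable f
  nonneg : ∀ x, 0 ≤ f x
  integral_eq_one : ∫ x, f x ∂μ = 1

theorem exists_isProbabilityDensity_ae_eq_add {μ : Measure X} {f g : X → ℝ} {α β : ℝ}
    (hf : IsProbabilityDensity μ f) (hg : IsProbabilityDensity μ g) (hαβ : α + β = 1)
    (h : ∀ᵐ x ∂μ, 0 ≤ α * f x + β * g x) :
    ∃ φ, IsProbabilityDensity μ φ ∧ φ =ᵐ[μ] fun x => α * f x + β * g x := by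
  have hφ : (fun x => max (α * f x + β * g x) 0) =ᵐ[μ] fun x => α * f x + β * g x :=
    h.mono fun x hx => max_eq_left hx
  have hfi := integrable_of_integral_eq_one hf.integral_eq_one
  have hgi := integrable_of_integral_eq_one hg.integral_eq_one
  refine ⟨_, ⟨?_, fun x => le_max_right _ _, ?_⟩, hφ⟩
  · have := hf.measurable; have := hg.measurable; fun_prop
  · rw [integral_congr_ae hφ, integral_add (hfi.const_mul _) (hgi.const_mul _),
      integral_const_mul, integral_const_mul, hf.integral_eq_one, hg.integral_eq_one,
      mul_one, mul_one, hαβ]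

namespace IsIdentifiable

variable {μ : Measure X} {ν : Measure Y} {w1 w2 : ℝ} {f1x f2x : X → ℝ} {f1y f2y : Y → ℝ}

theorem swap_components (h : IsIdentifiable μ ν w1 w2 f1x f2x f1y f2y) :
    IsIdentifiable μ ν w2 w1 f2x f1x f2y f1y := by
  intro w1' w2' g1x g2x g1y g2y h1 h2 hs m1 m2 m3 m4 n1 n2 n3 n4 i1 i2 i3 i4 hE
  have := h w2' w1' g2x g1x g2y g1y h2 h1 (by linarith) m2 m1 m4 m3 n2 n1 n4 n3 i2 i1 i4 i3
    (hE.mono fun p hp => by linarith)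
  tauto

theorem swap_coords [SFinite μ] [SFinite ν] (h : IsIdentifiable μ ν w1 w2 f1x f2x f1y f2y) :
    IsIdentifiable ν μ w1 w2 f1y f2y f1x f2x := by
  intro w1' w2' g1y g2y g1x g2x h1 h2 hs m1 m2 m3 m4 n1 n2 n3 n4 i1 i2 i3 i4 hE
  have := h w1' w2' g1x g2x g1y g2y h1 h2 hs m3 m4 m1 m2 n3 n4 n1 n2 i3 i4 i1 i2
    ((ae_prod_swap hE).mono fun p hp => by
      simp only [Prod.fst_swap, Prod.snd_swap] at hp; linear_combination hp)
  tauto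

theorem not_aeDominatedBy (h : IsIdentifiable μ ν w1 w2 f1x f2x f1y f2y)
    (hw1 : 0 < w1) (hw2 : 0 < w2) (hw : w1 + w2 = 1) (hf1x : IsProbabilityDensity μ f1x)
    (hf2x : IsProbabilityDensity μ f2x) (hf1y : IsProbabilityDensity ν f1y)
    (hf2y : IsProbabilityDensity ν f2y) : ¬ AEDominatedBy μ f1x f2x := by
  rintro ⟨C, hC⟩
  obtain ⟨t, ⟨ht0, htC⟩, htw⟩ :=
    ((Set.Ioo_infinite (by positivity : 0 < w2 / (|C| + 1))).sdiff
      (Set.finite_singleton (w2 - w1))).nonempty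
  rw [lt_div_iff₀ (by positivity)] at htC
  have htw2 : 0 < w2 - t := by nlinarith [abs_nonneg C]
  obtain ⟨g2x, hg2x, hg2x_eq⟩ := exists_isProbabilityDensity_ae_eq_add hf1x hf2x
    (α := -t / (w2 - t)) (β := w2 / (w2 - t)) (by field_simp; ring) (hC.mono fun x hx => by
      rw [div_mul_eq_mul_div, div_mul_eq_mul_div, ← add_div]
      refine div_nonneg ?_ htw2.le
      have h1 : t * f1x x ≤ t * |C| * f2x x := by
        rw [mul_assoc]
        exact mul_le_mul_of_nonneg_left
          (hx.trans (mul_le_mul_of_nonneg_right (le_abs_self C) (hf2x.nonneg x))) ht0.le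
      nlinarith [mul_le_mul_of_nonneg_right (by nlinarith : t * |C| ≤ w2) (hf2x.nonneg x)])
  obtain ⟨g1y, hg1y, hg1y_eq⟩ := exists_isProbabilityDensity_ae_eq_add hf1y hf2y
    (α := w1 / (w1 + t)) (β := t / (w1 + t)) (by field_simp) (ae_of_all _ fun y => by
      have := hf1y.nonneg y; have := hf2y.nonneg y; positivity)
  rcases h (w1 + t) (w2 - t) f1x g2x g1y f2y (by positivity) htw2.le (by linarith)
      hf1x.measurable hg2x.measurable hg1y.measurable hf2y.measurable
      hf1x.nonneg hg2x.nonneg hg1y.nonneg hf2y.nonneg hf1x.integral_eq_one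
      hg2x.integral_eq_one hg1y.integral_eq_one hf2y.integral_eq_one
      (by filter_upwards [Measure.quasiMeasurePreserving_fst.ae hg2x_eq,
            Measure.quasiMeasurePreserving_snd.ae hg1y_eq] with p hx hy
          rw [hx, hy]
          field_simp
          ring) with ⟨h1, -⟩ | ⟨h1, -⟩
  · linarith
  · exact htw (by simp only [Set.mem_singleton_iff]; linarith)

end IsIdentifiable

section Identifiability

variable {μ : Measure X} {ν : Measure Y} {w1 w2 : ℝ} {f1x f2x : X → ℝ} {f1y f2y : Y → ℝ}

theorem ae_rank_one_eq {w1' w2' : ℝ} {g1x g2x : X → ℝ} {g1y g2y : Y → ℝ}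
    (hw : w1 + w2 = 1) (hw' : w1' + w2' = 1)
    (hE : ∀ᵐ p ∂μ.prod ν, w1' * g1x p.1 * g1y p.2 + w2' * g2x p.1 * g2y p.2
      = w1 * f1x p.1 * f1y p.2 + w2 * f2x p.1 * f2y p.2)
    (hmx : ∀ᵐ x ∂μ, w1' * g1x x + w2' * g2x x = w1 * f1x x + w2 * f2x x)
    (hmy : ∀ᵐ y ∂ν, w1' * g1y y + w2' * g2y y = w1 * f1y y + w2 * f2y y) :
    ∀ᵐ p ∂μ.prod ν, w1' * w2' * ((g1x p.1 - g2x p.1) * (g1y p.2 - g2y p.2))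
      = w1 * w2 * ((f1x p.1 - f2x p.1) * (f1y p.2 - f2y p.2)) := by
  filter_upwards [hE, Measure.quasiMeasurePreserving_fst.ae hmx,
    Measure.quasiMeasurePreserving_snd.ae hmy] with p hE hx hy
  rw [mixture_eq_marginal_mul_add_cov hw', mixture_eq_marginal_mul_add_cov hw, hx, hy] at hE
  linarith

theorem isIdentifiable_of_not_aeDominatedBy [SFinite μ] [SFinite ν]
    (hw1 : 0 < w1) (hw2 : 0 < w2) (hw : w1 + w2 = 1)
    (hf1x : ∫ x, f1x x ∂μ = 1) (hf2x : ∫ x, f2x x ∂μ = 1)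
    (hf1y : ∫ y, f1y y ∂ν = 1) (hf2y : ∫ y, f2y y ∂ν = 1)
    (hΔx : ¬ (f1x =ᵐ[μ] f2x)) (hΔy : ¬ (f1y =ᵐ[ν] f2y))
    (h1x : ¬ AEDominatedBy μ f1x f2x) (h2x : ¬ AEDominatedBy μ f2x f1x)
    (h1y : ¬ AEDominatedBy ν f1y f2y) (h2y : ¬ AEDominatedBy ν f2y f1y) :
    IsIdentifiable μ ν w1 w2 f1x f2x f1y f2y := by
  intro w1' w2' g1x g2x g1y g2y hw1' hw2' hw' _ _ _ _ hg1x hg2x hg1y hg2y ig1x ig2x ig1y ig2y hE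
  have hmx := ae_marginal_eq (a₁ := fun x => w1' * g1x x) (a₂ := fun x => w2' * g2x x)
    (c₁ := fun x => w1 * f1x x) (c₂ := fun x => w2 * f2x x) hE ig1y ig2y hf1y hf2y
  have hmy := ae_marginal_eq (a₁ := fun y => w1' * g1y y) (a₂ := fun y => w2' * g2y y)
    (c₁ := fun y => w1 * f1y y) (c₂ := fun y => w2 * f2y y) ((ae_prod_swap hE).mono
      fun q hq => by simp only [Prod.fst_swap, Prod.snd_swap] at hq; linear_combination hq)
    ig1x ig2x hf1x hf2x
  obtain ⟨p, q, hpq, hp, hq⟩ := exists_ae_eq_const_mul_of_ae_prod_mul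
    (u := fun x => g1x x - g2x x) (u' := fun x => f1x x - f2x x)
    (v := fun y => g1y y - g2y y) (v' := fun y => f1y y - f2y y)
    (ae_rank_one_eq hw hw' hE hmx hmy) (by positivity)
    ((not_eventually.1 hΔx).mono fun x hx => sub_ne_zero.2 hx)
    ((not_eventually.1 hΔy).mono fun y hy => sub_ne_zero.2 hy)
  have hw'0 : w1' * w2' ≠ 0 := left_ne_zero_of_mul (hpq.trans_ne (by positivity))
  rcases weights_eq_of_coeff_bounds hw1 hw2 hw
      (hw1'.lt_of_ne (left_ne_zero_of_mul hw'0).symm)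
      (hw2'.lt_of_ne (right_ne_zero_of_mul hw'0).symm) hw' hpq
      (coeff_bounds_of_marginal_of_sub hw' hmx hp hg1x hg2x h1x h2x)
      (coeff_bounds_of_marginal_of_sub hw' hmy hq hg1y hg2y h1y h2y)
    with ⟨h1, hp1, hq1⟩ | ⟨h1, hp1, hq1⟩
  · obtain ⟨ex1, ex2⟩ := ae_eq_of_weight_eq hw hw' hmx hp h1 hp1
    obtain ⟨ey1, ey2⟩ := ae_eq_of_weight_eq hw hw' hmy hq h1 hq1
    exact Or.inl ⟨h1, by linarith, ex1, ex2, ey1, ey2⟩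
  · obtain ⟨ex1, ex2⟩ := ae_eq_swap_of_weight_eq hw hw' hmx hp h1 hp1
    obtain ⟨ey1, ey2⟩ := ae_eq_swap_of_weight_eq hw hw' hmy hq h1 hq1
    exact Or.inr ⟨h1, by linarith, ex1, ex2, ey1, ey2⟩

theorem isIdentifiable_iff [SFinite μ] [SFinite ν]
    (hw1 : 0 < w1) (hw2 : 0 < w2) (hw : w1 + w2 = 1)
    (hf1x : IsProbabilityDensity μ f1x) (hf2x : IsProbabilityDensity μ f2x)
    (hf1y : IsProbabilityDensity ν f1y) (hf2y : IsProbabilityDensity ν f2y)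
    (hΔx : ¬ (f1x =ᵐ[μ] f2x)) (hΔy : ¬ (f1y =ᵐ[ν] f2y)) :
    IsIdentifiable μ ν w1 w2 f1x f2x f1y f2y ↔
      ¬ AEDominatedBy μ f1x f2x ∧ ¬ AEDominatedBy μ f2x f1x ∧
        ¬ AEDominatedBy ν f1y f2y ∧ ¬ AEDominatedBy ν f2y f1y := by
  refine ⟨fun h => ⟨?_, ?_, ?_, ?_⟩, fun ⟨h1x, h2x, h1y, h2y⟩ =>
    isIdentifiable_of_not_aeDominatedBy hw1 hw2 hw hf1x.integral_eq_one hf2x.integral_eq_one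
      hf1y.integral_eq_one hf2y.integral_eq_one hΔx hΔy h1x h2x h1y h2y⟩
  · exact h.not_aeDominatedBy hw1 hw2 hw hf1x hf2x hf1y hf2y
  · exact h.swap_components.not_aeDominatedBy hw2 hw1 (by linarith) hf2x hf1x hf2y hf1y
  · exact h.swap_coords.not_aeDominatedBy hw1 hw2 hw hf1y hf2y hf1x hf2x
  · exact h.swap_coords.swap_components.not_aeDominatedBy hw2 hw1 (by linarith) hf2y hf1y hf2x hf1x

end Identifiability

end Development

theorem statement_19_general {Xt Yt : Type*} [MeasurableSpace Xt] [MeasurableSpace Yt]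
    (μ : Measure Xt) (ν : Measure Yt) [SigmaFinite μ] [SigmaFinite ν]
    (w1 w2 : ℝ) (hw1 : 0 < w1) (hw2 : 0 < w2) (hw : w1 + w2 = 1)
    (f1x f2x : Xt → ℝ) (f1y f2y : Yt → ℝ)
    (hf1x_meas : Measurable f1x) (hf2x_meas : Measurable f2x)
    (hf1y_meas : Measurable f1y) (hf2y_meas : Measurable f2y)
    (hf1x_nonneg : ∀ x, 0 ≤ f1x x) (hf2x_nonneg : ∀ x, 0 ≤ f2x x)
    (hf1y_nonneg : ∀ y, 0 ≤ f1y y) (hf2y_nonneg : ∀ y, 0 ≤ f2y y)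
    (hf1x_one : ∫ x, f1x x ∂μ = 1) (hf2x_one : ∫ x, f2x x ∂μ = 1)
    (hf1y_one : ∫ y, f1y y ∂ν = 1) (hf2y_one : ∫ y, f2y y ∂ν = 1)
    (hΔx : ¬ (f1x =ᵐ[μ] f2x)) (hΔy : ¬ (f1y =ᵐ[ν] f2y))
    -- the four essential suprema, with their bounds wᵢ < μ⁽ⁱ⁾_t ≤ 1
    (μ1x μ2x μ1y μ2y : ℝ)
    (hμ1x : μ1x = essSup (fun x => w1 * f1x x / (w1 * f1x x + w2 * f2x x))
        (μ.withDensity (fun x => ENNReal.ofReal (w1 * f1x x + w2 * f2x x))))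
    (hμ2x : μ2x = essSup (fun x => w2 * f2x x / (w1 * f1x x + w2 * f2x x))
        (μ.withDensity (fun x => ENNReal.ofReal (w1 * f1x x + w2 * f2x x))))
    (hμ1y : μ1y = essSup (fun y => w1 * f1y y / (w1 * f1y y + w2 * f2y y))
        (ν.withDensity (fun y => ENNReal.ofReal (w1 * f1y y + w2 * f2y y))))
    (hμ2y : μ2y = essSup (fun y => w2 * f2y y / (w1 * f1y y + w2 * f2y y))
        (ν.withDensity (fun y => ENNReal.ofReal (w1 * f1y y + w2 * f2y y))))
    (hμ1x_mem : w1 < μ1x ∧ μ1x ≤ 1) (hμ2x_mem : w2 < μ2x ∧ μ2x ≤ 1)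
    (hμ1y_mem : w1 < μ1y ∧ μ1y ≤ 1) (hμ2y_mem : w2 < μ2y ∧ μ2y ≤ 1) :
    -- (1) the pairwise products of the nonnegativity inequalities sandwich w'₁/w'₂
    (∀ γ w1' : ℝ, 0 < γ → 0 < w1' → w1' < 1 →
      ((μ2x - w2) / Real.sqrt (w1 * w2) ≤ (1 / γ) * Real.sqrt (w1' / (1 - w1'))) →
      ((μ1x - w1) / Real.sqrt (w1 * w2) ≤ (1 / γ) * Real.sqrt ((1 - w1') / w1')) →
      ((μ2y - w2) / Real.sqrt (w1 * w2) ≤ γ * Real.sqrt (w1' / (1 - w1'))) →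
      ((μ1y - w1) / Real.sqrt (w1 * w2) ≤ γ * Real.sqrt ((1 - w1') / w1')) →
      (μ2x - w2) * (μ2y - w2) / (w1 * w2) ≤ w1' / (1 - w1') ∧
        w1' / (1 - w1') ≤ w1 * w2 / ((μ1x - w1) * (μ1y - w1))) ∧
    -- (2) the two bounds both equal w₁/w₂ iff all four essential suprema equal 1
    (((μ2x - w2) * (μ2y - w2) / (w1 * w2) = w1 / w2 ∧
        w1 * w2 / ((μ1x - w1) * (μ1y - w1)) = w1 / w2)
      ↔ (μ1x = 1 ∧ μ2x = 1 ∧ μ1y = 1 ∧ μ2y = 1)) ∧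
    -- (3) identifiability up to permutation iff all four essential suprema equal 1
    ((∀ (w1' w2' : ℝ) (g1x g2x : Xt → ℝ) (g1y g2y : Yt → ℝ),
        0 ≤ w1' → 0 ≤ w2' → w1' + w2' = 1 →
        Measurable g1x → Measurable g2x → Measurable g1y → Measurable g2y →
        (∀ x, 0 ≤ g1x x) → (∀ x, 0 ≤ g2x x) →
        (∀ y, 0 ≤ g1y y) → (∀ y, 0 ≤ g2y y) →
        (∫ x, g1x x ∂μ = 1) → (∫ x, g2x x ∂μ = 1) →
        (∫ y, g1y y ∂ν = 1) → (∫ y, g2y y ∂ν = 1) →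
        (∀ᵐ p ∂(μ.prod ν),
          w1' * g1x p.1 * g1y p.2 + w2' * g2x p.1 * g2y p.2
            = w1 * f1x p.1 * f1y p.2 + w2 * f2x p.1 * f2y p.2) →
        ((w1' = w1 ∧ w2' = w2 ∧ g1x =ᵐ[μ] f1x ∧ g2x =ᵐ[μ] f2x ∧
            g1y =ᵐ[ν] f1y ∧ g2y =ᵐ[ν] f2y) ∨
         (w1' = w2 ∧ w2' = w1 ∧ g1x =ᵐ[μ] f2x ∧ g2x =ᵐ[μ] f1x ∧
            g1y =ᵐ[ν] f2y ∧ g2y =ᵐ[ν] f1y)))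
      ↔ (μ1x = 1 ∧ μ2x = 1 ∧ μ1y = 1 ∧ μ2y = 1)) := by
  have e1x : μ1x = 1 ↔ ¬ AEDominatedBy μ f1x f2x := by
    subst hμ1x
    exact posteriorSup_eq_one_iff hw1 hw2 hf1x_nonneg hf2x_nonneg hf1x_meas hf2x_meas hμ1x_mem.2
  have e2x : μ2x = 1 ↔ ¬ AEDominatedBy μ f2x f1x := by
    rw [hμ2x, essSup_posterior_comm] at hμ2x_mem ⊢
    exact posteriorSup_eq_one_iff hw2 hw1 hf2x_nonneg hf1x_nonneg hf2x_meas hf1x_meas hμ2x_mem.2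
  have e1y : μ1y = 1 ↔ ¬ AEDominatedBy ν f1y f2y := by
    subst hμ1y
    exact posteriorSup_eq_one_iff hw1 hw2 hf1y_nonneg hf2y_nonneg hf1y_meas hf2y_meas hμ1y_mem.2
  have e2y : μ2y = 1 ↔ ¬ AEDominatedBy ν f2y f1y := by
    rw [hμ2y, essSup_posterior_comm] at hμ2y_mem ⊢
    exact posteriorSup_eq_one_iff hw2 hw1 hf2y_nonneg hf1y_nonneg hf2y_meas hf1y_meas hμ2y_mem.2
  refine ⟨fun γ w1' hγ hw1' hw1'1 => odds_sandwich hw1 hw2 hμ1x_mem.1 hμ1y_mem.1 hμ2y_mem.1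
    hγ hw1' hw1'1, odds_bounds_eq_iff hw1 hw2 hw hμ1x_mem hμ2x_mem hμ1y_mem hμ2y_mem, ?_⟩
  rw [e1x, e2x, e1y, e2y]
  exact isIdentifiable_iff hw1 hw2 hw ⟨hf1x_meas, hf1x_nonneg, hf1x_one⟩
    ⟨hf2x_meas, hf2x_nonneg, hf2x_one⟩ ⟨hf1y_meas, hf1y_nonneg, hf1y_one⟩
    ⟨hf2y_meas, hf2y_nonneg, hf2y_one⟩ hΔx hΔy

/-- Identifiability criterion for C = 2 (Appendix A.1): multiplying the four
nonnegativity inequalities pairwise constrains w'₁/w'₂ to a sandwich; the lower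
and upper bounds both equal w₁/w₂ iff all four essential suprema μ⁽ⁱ⁾_t equal 1;
hence the two-component bivariate CIMM instance is identifiable up to
permutation iff all four μ⁽ⁱ⁾_t equal 1. -/
theorem statement_19 {Xt Yt : Type*} [MeasurableSpace Xt] [MeasurableSpace Yt]
    (μ : Measure Xt) (ν : Measure Yt) [SigmaFinite μ] [SigmaFinite ν]
    (w1 w2 : ℝ) (hw1 : 0 < w1) (hw2 : 0 < w2) (hw : w1 + w2 = 1)
    (f1x f2x : Xt → ℝ) (f1y f2y : Yt → ℝ)
    (hf1x_meas : Measurable f1x) (hf2x_meas : Measurable f2x)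
    (hf1y_meas : Measurable f1y) (hf2y_meas : Measurable f2y)
    (hf1x_nonneg : ∀ x, 0 ≤ f1x x) (hf2x_nonneg : ∀ x, 0 ≤ f2x x)
    (hf1y_nonneg : ∀ y, 0 ≤ f1y y) (hf2y_nonneg : ∀ y, 0 ≤ f2y y)
    (hf1x_int : Integrable f1x μ) (hf2x_int : Integrable f2x μ)
    (hf1y_int : Integrable f1y ν) (hf2y_int : Integrable f2y ν)
    (hf1x_one : ∫ x, f1x x ∂μ = 1) (hf2x_one : ∫ x, f2x x ∂μ = 1)
    (hf1y_one : ∫ y, f1y y ∂ν = 1) (hf2y_one : ∫ y, f2y y ∂ν = 1)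
    (hΔx : ¬ (f1x =ᵐ[μ] f2x)) (hΔy : ¬ (f1y =ᵐ[ν] f2y))
    -- the four essential suprema, with their bounds wᵢ < μ⁽ⁱ⁾_t ≤ 1
    (μ1x μ2x μ1y μ2y : ℝ)
    (hμ1x : μ1x = essSup (fun x => w1 * f1x x / (w1 * f1x x + w2 * f2x x))
        (μ.withDensity (fun x => ENNReal.ofReal (w1 * f1x x + w2 * f2x x))))
    (hμ2x : μ2x = essSup (fun x => w2 * f2x x / (w1 * f1x x + w2 * f2x x))
        (μ.withDensity (fun x => ENNReal.ofReal (w1 * f1x x + w2 * f2x x))))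
    (hμ1y : μ1y = essSup (fun y => w1 * f1y y / (w1 * f1y y + w2 * f2y y))
        (ν.withDensity (fun y => ENNReal.ofReal (w1 * f1y y + w2 * f2y y))))
    (hμ2y : μ2y = essSup (fun y => w2 * f2y y / (w1 * f1y y + w2 * f2y y))
        (ν.withDensity (fun y => ENNReal.ofReal (w1 * f1y y + w2 * f2y y))))
    (hμ1x_mem : w1 < μ1x ∧ μ1x ≤ 1) (hμ2x_mem : w2 < μ2x ∧ μ2x ≤ 1)
    (hμ1y_mem : w1 < μ1y ∧ μ1y ≤ 1) (hμ2y_mem : w2 < μ2y ∧ μ2y ≤ 1) :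
    -- (1) the pairwise products of the nonnegativity inequalities sandwich w'₁/w'₂
    (∀ γ w1' : ℝ, 0 < γ → 0 < w1' → w1' < 1 →
      ((μ2x - w2) / Real.sqrt (w1 * w2) ≤ (1 / γ) * Real.sqrt (w1' / (1 - w1'))) →
      ((μ1x - w1) / Real.sqrt (w1 * w2) ≤ (1 / γ) * Real.sqrt ((1 - w1') / w1')) →
      ((μ2y - w2) / Real.sqrt (w1 * w2) ≤ γ * Real.sqrt (w1' / (1 - w1'))) →
      ((μ1y - w1) / Real.sqrt (w1 * w2) ≤ γ * Real.sqrt ((1 - w1') / w1')) →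
      (μ2x - w2) * (μ2y - w2) / (w1 * w2) ≤ w1' / (1 - w1') ∧
        w1' / (1 - w1') ≤ w1 * w2 / ((μ1x - w1) * (μ1y - w1))) ∧
    -- (2) the two bounds both equal w₁/w₂ iff all four essential suprema equal 1
    (((μ2x - w2) * (μ2y - w2) / (w1 * w2) = w1 / w2 ∧
        w1 * w2 / ((μ1x - w1) * (μ1y - w1)) = w1 / w2)
      ↔ (μ1x = 1 ∧ μ2x = 1 ∧ μ1y = 1 ∧ μ2y = 1)) ∧
    -- (3) identifiability up to permutation iff all four essential suprema equal 1
    ((∀ (w1' w2' : ℝ) (g1x g2x : Xt → ℝ) (g1y g2y : Yt → ℝ),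
        0 ≤ w1' → 0 ≤ w2' → w1' + w2' = 1 →
        Measurable g1x → Measurable g2x → Measurable g1y → Measurable g2y →
        (∀ x, 0 ≤ g1x x) → (∀ x, 0 ≤ g2x x) →
        (∀ y, 0 ≤ g1y y) → (∀ y, 0 ≤ g2y y) →
        (∫ x, g1x x ∂μ = 1) → (∫ x, g2x x ∂μ = 1) →
        (∫ y, g1y y ∂ν = 1) → (∫ y, g2y y ∂ν = 1) →
        (∀ᵐ p ∂(μ.prod ν),
          w1' * g1x p.1 * g1y p.2 + w2' * g2x p.1 * g2y p.2
            = w1 * f1x p.1 * f1y p.2 + w2 * f2x p.1 * f2y p.2) →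
        ((w1' = w1 ∧ w2' = w2 ∧ g1x =ᵐ[μ] f1x ∧ g2x =ᵐ[μ] f2x ∧
            g1y =ᵐ[ν] f1y ∧ g2y =ᵐ[ν] f2y) ∨
         (w1' = w2 ∧ w2' = w1 ∧ g1x =ᵐ[μ] f2x ∧ g2x =ᵐ[μ] f1x ∧
            g1y =ᵐ[ν] f2y ∧ g2y =ᵐ[ν] f1y)))
      ↔ (μ1x = 1 ∧ μ2x = 1 ∧ μ1y = 1 ∧ μ2y = 1)) :=
  statement_19_general μ ν w1 w2 hw1 hw2 hw f1x f2x f1y f2y hf1x_meas hf2x_meas hf1y_meas hf2y_meas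
    hf1x_nonneg hf2x_nonneg hf1y_nonneg hf2y_nonneg hf1x_one hf2x_one hf1y_one hf2y_one hΔx hΔy μ1x
    μ2x μ1y μ2y hμ1x hμ2x hμ1y hμ2y hμ1x_mem hμ2x_mem hμ1y_mem hμ2y_mem
end
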